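/- arXiv:2112.02185 — 11 statements merged into one kernel-verified Lean document; each statement's English description precedes it below -/
import Mathlib

section
/- Let d ≥ 1, let f⋆ : ℝ^d → ℝ, let x₁, …, x_t be points of ℝ^d, and for each ℓ ∈ {1,…,t} let f_ℓ : ℝ^d → ℝ be a model satisfying the optimism condition f_ℓ(x_ℓ) ≥ f⋆(x_ℓ). Define the acceptance indicator a_ℓ = 1 if f_ℓ(x_ℓ) ≥ 0 and a_ℓ = 0 otherwise. Then the pseudo-regret R(t) = Σ_{ℓ=1}^t [ max(0, 2μ(f⋆(x_ℓ)) − 1) − a_ℓ·(2μ(f⋆(x_ℓ)) − 1) ] satisfies R(t) ≤ Σ_{ℓ=1}^t 2·a_ℓ·( μ(f_ℓ(x_ℓ)) − μ(f⋆(x_ℓ)) ). -/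
open Finset

/-- The logistic function `μ(z) = exp(z) / (1 + exp(z))`. -/
noncomputable def logistic (z : ℝ) : ℝ := Real.exp z / (1 + Real.exp z)

lemma logistic_mono {u v : ℝ} (h : u ≤ v) : logistic u ≤ logistic v := by
  unfold logistic
  have hu : (0:ℝ) < 1 + Real.exp u := by positivity
  have hv : (0:ℝ) < 1 + Real.exp v := by positivity
  rw [div_le_div_iff₀ hu hv]
  have := Real.exp_le_exp.2 h
  nlinarith

lemma logistic_half {z : ℝ} (h : 0 ≤ z) : (1:ℝ)/2 ≤ logistic z := by
  unfold logistic
  have hz : (0:ℝ) < 1 + Real.exp z := by positivity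
  rw [div_le_div_iff₀ (by norm_num) hz]
  have := Real.one_le_exp h
  nlinarith

lemma logistic_lt_half {z : ℝ} (h : z < 0) : logistic z < 1/2 := by
  unfold logistic
  have hz : (0:ℝ) < 1 + Real.exp z := by positivity
  rw [div_lt_div_iff₀ hz (by norm_num)]
  have := Real.exp_lt_one_iff.2 h
  nlinarith

/-- Regret of any optimistic algorithm is bounded by the model estimation error:
if at every step `ℓ` the model `f ℓ` is optimistic at the query point,
i.e. `f ℓ (x ℓ) ≥ f⋆ (x ℓ)`, and the acceptance indicator is
`a ℓ = 1` when `f ℓ (x ℓ) ≥ 0` and `0` otherwise, then the pseudo-regret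
`R(t) = Σ_ℓ max(0, 2μ(f⋆(x ℓ)) − 1) − a ℓ · (2μ(f⋆(x ℓ)) − 1)` satisfies
`R(t) ≤ Σ_ℓ 2 a ℓ (μ(f ℓ (x ℓ)) − μ(f⋆(x ℓ)))`. -/
theorem stmt_0 (d : ℕ) (hd : 1 ≤ d) (t : ℕ)
    (fstar : EuclideanSpace ℝ (Fin d) → ℝ)
    (x : ℕ → EuclideanSpace ℝ (Fin d))
    (f : ℕ → EuclideanSpace ℝ (Fin d) → ℝ)
    (hopt : ∀ ℓ ∈ Finset.range t, fstar (x ℓ) ≤ f ℓ (x ℓ))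
    (a : ℕ → ℝ)
    (ha : ∀ ℓ, a ℓ = if 0 ≤ f ℓ (x ℓ) then 1 else 0) :
    ∑ ℓ ∈ Finset.range t,
        (max 0 (2 * logistic (fstar (x ℓ)) - 1)
          - a ℓ * (2 * logistic (fstar (x ℓ)) - 1))
      ≤ ∑ ℓ ∈ Finset.range t,
          2 * a ℓ * (logistic (f ℓ (x ℓ)) - logistic (fstar (x ℓ))) := by
  apply Finset.sum_le_sum
  intro l hl
  have hop := hopt l hl
  rw [ha l]
  by_cases hf : 0 ≤ f l (x l)
  · simp only [if_pos hf]
    have h1 : (1:ℝ)/2 ≤ logistic (f l (x l)) := logistic_half hf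
    have h2 : logistic (fstar (x l)) ≤ logistic (f l (x l)) := logistic_mono hop
    rcases le_or_gt 0 (2 * logistic (fstar (x l)) - 1) with h | h
    · rw [max_eq_right h]; nlinarith
    · rw [max_eq_left h.le]; nlinarith
  · simp only [if_neg hf]
    push_neg at hf
    have h2 : logistic (fstar (x l)) < 1/2 :=
      lt_of_le_of_lt (logistic_mono hop) (logistic_lt_half hf)
    have : max 0 (2 * logistic (fstar (x l)) - 1) = 0 := max_eq_left (by linarith)
    rw [this]; simp
end

section
/- Let d ≥ 1, L > 0, τ ∈ (0,1), and let D be a finite nonempty list of pairs (x, y) ∈ ℝ^d × {0,1} such that: (1) ‖x − x'‖₂ ≤ τ²/(128L) for all (x,y), (x',y') ∈ D; (2) there is an L-Lipschitz function f⋆ : ℝ^d → ℝ with |f⋆(x)| ≥ τ for every (x,y) ∈ D and with f⋆(x̃) > 0 for some (x̃, ỹ) ∈ D; (3) the empirical mean of the labels satisfies (1/|D|)·Σ_{(x,y)∈D} y ≥ 1/4 + μ(τ)/2. Then every minimizer f̂ of the cross-entropy loss L(· | D) over the class of all L-Lipschitz functions ℝ^d → ℝ satisfies f̂(x) > 0 for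 all (x, y) ∈ D. -/
/-- `f : ℝ^d → ℝ` is `L`-Lipschitz: `|f x − f x'| ≤ L ‖x − x'‖₂` for all `x, x'`. -/
def LipschitzCst {d : ℕ} (L : ℝ) (f : EuclideanSpace ℝ (Fin d) → ℝ) : Prop :=
  ∀ x x' : EuclideanSpace ℝ (Fin d), |f x - f x'| ≤ L * ‖x - x'‖

/-- The cross-entropy loss of `f` on the list of labeled points `D`:
`L(f | D) = Σ_{(x,y)∈D} −y·log(μ(f x)) − (1−y)·log(1 − μ(f x))`. -/
noncomputable def ceLoss {d : ℕ} (f : EuclideanSpace ℝ (Fin d) → ℝ)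
    (D : List (EuclideanSpace ℝ (Fin d) × ℝ)) : ℝ :=
  (D.map fun p =>
    -p.2 * Real.log (logistic (f p.1)) - (1 - p.2) * Real.log (1 - logistic (f p.1))).sum

noncomputable def Fl (z : ℝ) : ℝ := Real.log (1 + Real.exp z)

lemma one_add_exp_pos (z : ℝ) : (0:ℝ) < 1 + Real.exp z := by positivity

lemma pt_loss (y z : ℝ) :
    -y * Real.log (logistic z) - (1 - y) * Real.log (1 - logistic z) = Fl z - y * z := by
  have h1 : (0:ℝ) < 1 + Real.exp z := one_add_exp_pos z
  have hlog1 : Real.log (logistic z) = z - Fl z := by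
    unfold logistic Fl
    rw [Real.log_div (Real.exp_ne_zero z) (ne_of_gt h1), Real.log_exp]
  have h2 : 1 - logistic z = 1 / (1 + Real.exp z) := by
    unfold logistic; field_simp; ring
  have hlog2 : Real.log (1 - logistic z) = -Fl z := by
    rw [h2, one_div, Real.log_inv]; rfl
  rw [hlog1, hlog2]; ring

lemma ceLoss_eq {d : ℕ} (f : EuclideanSpace ℝ (Fin d) → ℝ)
    (D : List (EuclideanSpace ℝ (Fin d) × ℝ)) :
    ceLoss f D = (D.map fun p => Fl (f p.1) - p.2 * f p.1).sum := by
  unfold ceLoss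
  congr 1
  apply List.map_congr_left
  intro p _
  exact pt_loss p.2 (f p.1)

lemma Fl_lower (z : ℝ) : Real.log 2 + z / 2 ≤ Fl z := by
  have h : 2 * Real.exp (z / 2) ≤ 1 + Real.exp z := by
    have := sq_nonneg (Real.exp (z / 2) - 1)
    have he : Real.exp (z / 2) * Real.exp (z / 2) = Real.exp z := by
      rw [← Real.exp_add]; ring_nf
    nlinarith [Real.exp_pos (z / 2)]
  calc Real.log 2 + z / 2 = Real.log (2 * Real.exp (z / 2)) := by
        rw [Real.log_mul (by norm_num) (Real.exp_ne_zero _), Real.log_exp]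
    _ ≤ Fl z := Real.log_le_log (by positivity) h

lemma Fl_upper (z : ℝ) : Fl z ≤ Real.log 2 + z / 2 + z ^ 2 / 8 := by
  have hcosh := Real.cosh_le_exp_half_sq (z / 2)
  have hid : 1 + Real.exp z = Real.exp (z / 2) * (2 * Real.cosh (z / 2)) := by
    rw [Real.cosh_eq]
    have h1 : Real.exp (z / 2) * Real.exp (z / 2) = Real.exp z := by
      rw [← Real.exp_add]; ring_nf
    have h2 : Real.exp (z / 2) * Real.exp (-(z / 2)) = 1 := by
      rw [← Real.exp_add]; simp
    nlinarith
  have hb : 1 + Real.exp z ≤ Real.exp (z / 2) * (2 * Real.exp ((z / 2) ^ 2 / 2)) := by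
    rw [hid]
    have := Real.exp_pos (z / 2)
    nlinarith
  calc Fl z ≤ Real.log (Real.exp (z / 2) * (2 * Real.exp ((z / 2) ^ 2 / 2))) :=
        Real.log_le_log (one_add_exp_pos z) hb
    _ = Real.log 2 + z / 2 + z ^ 2 / 8 := by
        rw [Real.log_mul (Real.exp_ne_zero _) (by positivity),
          Real.log_mul (by norm_num) (Real.exp_ne_zero _), Real.log_exp, Real.log_exp]
        ring

/-- The shifted difference `Fl (z + c) - Fl z` is monotone in `z` for `c ≥ 0`. -/
lemma Fl_shift_mono {c z w : ℝ} (hc : 0 ≤ c) (hzw : z ≤ w) :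
    Fl (z + c) - Fl z ≤ Fl (w + c) - Fl w := by
  have key : (1 + Real.exp (z + c)) * (1 + Real.exp w)
      ≤ (1 + Real.exp (w + c)) * (1 + Real.exp z) := by
    have h1 : Real.exp (z + c) = Real.exp z * Real.exp c := (Real.exp_add z c)
    have h2 : Real.exp (w + c) = Real.exp w * Real.exp c := (Real.exp_add w c)
    have h3 : Real.exp z ≤ Real.exp w := Real.exp_le_exp.mpr hzw
    have h4 : (1:ℝ) ≤ Real.exp c := by
      have := Real.add_one_le_exp c; linarith
    have h5 : Real.exp (z + w + c) = Real.exp z * Real.exp w * Real.exp c := by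
      rw [← Real.exp_add, ← Real.exp_add]
    nlinarith [Real.exp_pos z, Real.exp_pos w]
  have hlog := Real.log_le_log (by positivity) key
  rw [Real.log_mul (ne_of_gt (one_add_exp_pos _)) (ne_of_gt (one_add_exp_pos _)),
    Real.log_mul (ne_of_gt (one_add_exp_pos _)) (ne_of_gt (one_add_exp_pos _))] at hlog
  unfold Fl
  linarith

lemma sum_map_add {α : Type*} (l : List α) (f g : α → ℝ) :
    (l.map fun a => f a + g a).sum = (l.map f).sum + (l.map g).sum := by
  induction l with
  | nil => simp
  | cons a t ih => simp [ih]; ring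

lemma sum_map_const_sub {α : Type*} (l : List (α × ℝ)) (B c : ℝ) :
    (l.map fun p => B - c * p.2).sum = (l.length : ℝ) * B - c * (l.map Prod.snd).sum := by
  induction l with
  | nil => simp
  | cons a t ih => simp [ih]; push_cast; ring

set_option maxHeartbeats 2000000 in
/-- Lemma 3 of the paper: if all points of the dataset `D` are within distance
`τ²/(128L)` of each other, the labels are generated consistently with an `L`-Lipschitz
model `f⋆` with gap `τ` that is positive at some point of `D`, and the empirical label
mean is at least `1/4 + μ(τ)/2`, then every minimizer of the cross-entropy loss over the
class of `L`-Lipschitz functions is positive on all of `D`. -/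
theorem stmt_1 (d : ℕ) (hd : 1 ≤ d) (L τ : ℝ) (hL : 0 < L) (hτ : τ ∈ Set.Ioo (0 : ℝ) 1)
    (D : List (EuclideanSpace ℝ (Fin d) × ℝ)) (hne : D ≠ [])
    (hlab : ∀ p ∈ D, p.2 = 0 ∨ p.2 = 1)
    (hdiam : ∀ p ∈ D, ∀ q ∈ D, ‖p.1 - q.1‖ ≤ τ ^ 2 / (128 * L))
    (fstar : EuclideanSpace ℝ (Fin d) → ℝ) (hfstar : LipschitzCst L fstar)
    (hgap : ∀ p ∈ D, τ ≤ |fstar p.1|)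
    (hpos : ∃ p ∈ D, 0 < fstar p.1)
    (hmean : 1 / 4 + logistic τ / 2 ≤ (D.map Prod.snd).sum / D.length)
    (fhat : EuclideanSpace ℝ (Fin d) → ℝ) (hfhat : LipschitzCst L fhat)
    (hmin : ∀ g : EuclideanSpace ℝ (Fin d) → ℝ, LipschitzCst L g → ceLoss fhat D ≤ ceLoss g D) :
    ∀ p ∈ D, 0 < fhat p.1 := by
  obtain ⟨hτ0, hτ1⟩ := hτ
  by_contra hcon
  push_neg at hcon
  obtain ⟨p₀, hp₀D, hp₀⟩ := hcon
  -- fhat ≤ ε on D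
  set ε : ℝ := τ ^ 2 / 128 with hε
  set c : ℝ := τ / 8 with hc
  have hεpos : 0 < ε := by positivity
  have hcpos : 0 < c := by positivity
  have hbd : ∀ p ∈ D, fhat p.1 ≤ ε := by
    intro p hp
    have h1 := hfhat p.1 p₀.1
    have h2 := hdiam p hp p₀ hp₀D
    have h3 : fhat p.1 - fhat p₀.1 ≤ |fhat p.1 - fhat p₀.1| := le_abs_self _
    have h4 : L * ‖p.1 - p₀.1‖ ≤ L * (τ ^ 2 / (128 * L)) := by
      exact mul_le_mul_of_nonneg_left h2 hL.le
    have h5 : L * (τ ^ 2 / (128 * L)) = ε := by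
      field_simp [hε]; ring
    linarith
  -- the competitor
  set g : EuclideanSpace ℝ (Fin d) → ℝ := fun x => fhat x + c with hg
  have hgl : LipschitzCst L g := by
    intro x x'
    have := hfhat x x'
    simpa [hg] using this
  have hminle := hmin g hgl
  -- label sum bound
  have hn : 0 < (D.length : ℝ) := by
    have : D.length ≠ 0 := fun h => hne (List.length_eq_zero_iff.mp h)
    positivity
  have hμτ : 1 / 2 + τ / 8 ≤ logistic τ := by
    unfold logistic
    rw [le_div_iff₀ (one_add_exp_pos τ)]
    have h1 : 1 + τ ≤ Real.exp τ := by linarith [Real.add_one_le_exp τ]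
    have h2 : Real.exp τ < 3 := by
      have := Real.exp_le_exp.mpr hτ1.le
      have := Real.exp_one_lt_d9
      linarith
    nlinarith
  have hysum : (D.length : ℝ) * (1 / 2 + τ / 16) ≤ (D.map Prod.snd).sum := by
    have h1 : 1 / 2 + τ / 16 ≤ (D.map Prod.snd).sum / D.length := by
      have := hmean; linarith
    calc (D.length : ℝ) * (1 / 2 + τ / 16)
        ≤ (D.length : ℝ) * ((D.map Prod.snd).sum / D.length) := by
          exact mul_le_mul_of_nonneg_left h1 hn.le
      _ = (D.map Prod.snd).sum := by field_simp
  -- per-point bound constant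
  set B : ℝ := Fl (ε + c) - Fl ε with hB
  have hBle : B ≤ c / 2 + (ε + c) ^ 2 / 8 := by
    have h1 := Fl_upper (ε + c)
    have h2 := Fl_lower ε
    rw [hB]; nlinarith
  -- pointwise: loss of g minus loss of fhat ≤ B - c*y
  have hpt : ∀ p ∈ D, Fl (g p.1) - p.2 * g p.1
      ≤ (Fl (fhat p.1) - p.2 * fhat p.1) + (B - c * p.2) := by
    intro p hp
    have h1 : Fl (fhat p.1 + c) - Fl (fhat p.1) ≤ B := by
      rw [hB]; exact Fl_shift_mono hcpos.le (hbd p hp)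
    have h2 : g p.1 = fhat p.1 + c := rfl
    rw [h2]; nlinarith [h1]
  have hsum : ceLoss g D ≤ ceLoss fhat D + (D.map fun p => B - c * p.2).sum := by
    rw [ceLoss_eq, ceLoss_eq, ← sum_map_add]
    exact List.sum_le_sum hpt
  have hsum2 : (D.map fun p => B - c * p.2).sum
      = (D.length : ℝ) * B - c * (D.map Prod.snd).sum := sum_map_const_sub D B c
  -- final contradiction
  have hneg : (D.length : ℝ) * B - c * (D.map Prod.snd).sum < 0 := by
    have h1 : c * ((D.length : ℝ) * (1 / 2 + τ / 16)) ≤ c * (D.map Prod.snd).sum :=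
      mul_le_mul_of_nonneg_left hysum hcpos.le
    have h2 : B < c * (1 / 2 + τ / 16) := by
      have hεle : ε ≤ τ / 128 := by
        rw [hε]; nlinarith
      have h3 : ε + c ≤ 17 * τ / 128 := by rw [hc]; linarith
      have h3' : 0 ≤ ε + c := by positivity
      have h4 : (ε + c) ^ 2 ≤ (17 * τ / 128) ^ 2 := by nlinarith
      have h5 : c * (1 / 2 + τ / 16) = c / 2 + τ ^ 2 / 128 := by rw [hc]; ring
      have h6 : (17 * τ / 128) ^ 2 / 8 < τ ^ 2 / 128 := by nlinarith
      linarith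
    calc (D.length : ℝ) * B - c * (D.map Prod.snd).sum
        < (D.length : ℝ) * (c * (1 / 2 + τ / 16)) - c * (D.map Prod.snd).sum := by
          have := mul_lt_mul_of_pos_left h2 hn
          linarith
      _ ≤ 0 := by
          have he : (D.length : ℝ) * (c * (1 / 2 + τ / 16))
              = c * ((D.length : ℝ) * (1 / 2 + τ / 16)) := by ring
          linarith
  rw [hsum2] at hsum
  linarith
end

section
/- Let d ≥ 1, L > 0, τ ∈ (0,1), and let D be a finite nonempty list of pairs (x, y) ∈ ℝ^d × {0,1} such that: (1) ‖x − x'‖₂ ≤ τ²/(128L) for all (x,y), (x',y') ∈ D; (2) there is an L-Lipschitz function f⋆ : ℝ^d → ℝ with |f⋆(x)| ≥ τ for every (x,y) ∈ D and with f⋆(x̃) > 0 for some (x̃, ỹ) ∈ D; (3) (1/|D|)·Σ_{(x,y)∈D} y ≥ 1/4 + μ(τ)/2. Let g : ℝ^d → ℝ be the constant function with value μ⁻¹(1/2 + 487τ/6400). Then for every L-Lipschitz function f : ℝ^d → ℝ with f(x₀) ≤ 0 for some (x₀, y₀) ∈ D, the cross-entropy losses satisfy L(f | D) > L(g | D). 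-/
/-- The inverse of the logistic function (the logit function). -/
noncomputable def logit (q : ℝ) : ℝ := Real.log (q / (1 - q))

lemma log_logistic (t : ℝ) : Real.log (logistic t) = t - Real.log (1 + Real.exp t) := by
  have h : (0:ℝ) < 1 + Real.exp t := by positivity
  rw [logistic, Real.log_div (Real.exp_ne_zero t) (ne_of_gt h), Real.log_exp]

lemma log_one_sub_logistic (t : ℝ) :
    Real.log (1 - logistic t) = - Real.log (1 + Real.exp t) := by
  have h : (0:ℝ) < 1 + Real.exp t := by positivity
  have h2 : 1 - logistic t = (1 + Real.exp t)⁻¹ := by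
    rw [logistic]; field_simp; ring
  rw [h2, Real.log_inv]

lemma sp_neg (t : ℝ) : Real.log (1 + Real.exp (-t)) = Real.log (1 + Real.exp t) - t := by
  have h : (0:ℝ) < 1 + Real.exp t := by positivity
  have h2 : 1 + Real.exp (-t) = (1 + Real.exp t) * Real.exp (-t) := by
    rw [Real.exp_neg]
    field_simp
    ring
  rw [h2, Real.log_mul (ne_of_gt h) (Real.exp_ne_zero _), Real.log_exp]; ring

lemma term_eq (t y : ℝ) :
    -y * Real.log (logistic t) - (1 - y) * Real.log (1 - logistic t)
      = y * Real.log (1 + Real.exp (-t)) + (1 - y) * Real.log (1 + Real.exp t) := by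
  rw [log_logistic, log_one_sub_logistic, sp_neg]; ring

lemma sp_le_sp {u v : ℝ} (h : u ≤ v) :
    Real.log (1 + Real.exp u) ≤ Real.log (1 + Real.exp v) := by
  have := Real.exp_le_exp.mpr h
  apply Real.log_le_log (by positivity) (by linarith)

lemma sp_mid (u v : ℝ) :
    2 * Real.log (1 + Real.exp ((u + v) / 2)) ≤
      Real.log (1 + Real.exp u) + Real.log (1 + Real.exp v) := by
  have h1 : Real.exp (u/2) * Real.exp (u/2) = Real.exp u := by
    rw [← Real.exp_add]; ring_nf
  have h2 : Real.exp (v/2) * Real.exp (v/2) = Real.exp v := by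
    rw [← Real.exp_add]; ring_nf
  have h3 : Real.exp (u/2) * Real.exp (v/2) = Real.exp ((u+v)/2) := by
    rw [← Real.exp_add]; ring_nf
  have hu : (0:ℝ) < 1 + Real.exp u := by positivity
  have hv : (0:ℝ) < 1 + Real.exp v := by positivity
  have key : (1 + Real.exp ((u+v)/2))^2 ≤ (1 + Real.exp u) * (1 + Real.exp v) := by
    nlinarith [sq_nonneg (Real.exp (u/2) - Real.exp (v/2))]
  calc 2 * Real.log (1 + Real.exp ((u + v) / 2))
      = Real.log ((1 + Real.exp ((u+v)/2))^2) := by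
        rw [Real.log_pow]; push_cast; ring
    _ ≤ Real.log ((1 + Real.exp u) * (1 + Real.exp v)) :=
        Real.log_le_log (by positivity) key
    _ = _ := Real.log_mul (ne_of_gt hu) (ne_of_gt hv)

lemma logistic_logit {q : ℝ} (h0 : 0 < q) (h1 : q < 1) : logistic (logit q) = q := by
  have h2 : (0:ℝ) < 1 - q := by linarith
  rw [logit, logistic, Real.exp_log (by positivity)]
  field_simp; ring

lemma sum_affine {α : Type*} (D : List (α × ℝ)) (A B : ℝ) :
    (D.map fun p => p.2 * A + (1 - p.2) * B).sum
      = (D.map Prod.snd).sum * (A - B) + (D.length : ℝ) * B := by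
  induction D with
  | nil => simp
  | cons p t ih =>
      simp only [List.map_cons, List.sum_cons, ih, List.length_cons]
      push_cast; ring

lemma key_ineq (τ : ℝ) (h0 : 0 < τ) (h1 : τ < 1) :
    τ^2/256 < (1/4 + logistic τ/2) * Real.log (1 + 487*τ/3200)
      + (1 - (1/4 + logistic τ/2)) * Real.log (1 - 487*τ/3200) := by
  set u : ℝ := 487*τ/3200 with hu
  have hu0 : 0 < u := by positivity
  have hu1 : u < 487/3200 := by rw [hu]; linarith
  have h1u : (0:ℝ) < 1 - u := by linarith
  have h1u' : (0:ℝ) < 1 + u := by linarith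
  have hE1 : 1 + τ ≤ Real.exp τ := by linarith [Real.add_one_le_exp τ]
  have hE2 : Real.exp τ < 2.7182818286 :=
    lt_of_le_of_lt (Real.exp_le_exp.mpr h1.le) Real.exp_one_lt_d9
  have hEpos : (0:ℝ) < 1 + Real.exp τ := by positivity
  have hs : τ/15 ≤ (1/4 + logistic τ/2) - 1/2 := by
    have hval : (1/4 + logistic τ/2) - 1/2 = (Real.exp τ - 1) / (4*(1 + Real.exp τ)) := by
      rw [logistic]; field_simp; ring
    rw [hval, le_div_iff₀ (by positivity)]
    nlinarith
  have hA : (0:ℝ) < 1 - u^2 := by nlinarith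
  have hL1 : -u^2 * (1 - (487/3200:ℝ)^2)⁻¹ ≤ Real.log (1+u) + Real.log (1-u) := by
    have h := Real.one_sub_inv_le_log_of_pos hA
    have heq : Real.log (1 - u^2) = Real.log (1+u) + Real.log (1-u) := by
      rw [← Real.log_mul (ne_of_gt h1u') (ne_of_gt h1u)]; ring_nf
    have hinv : (1 - u^2)⁻¹ ≤ (1 - (487/3200:ℝ)^2)⁻¹ := by
      apply inv_anti₀ (by norm_num) (by nlinarith)
    have heq2 : 1 - (1 - u^2)⁻¹ = -u^2 * (1 - u^2)⁻¹ := by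
      field_simp; ring
    nlinarith [sq_nonneg u, mul_le_mul_of_nonneg_left hinv (sq_nonneg u)]
  have hL2 : 6400*u/3687 ≤ Real.log (1+u) - Real.log (1-u) := by
    have hq : (0:ℝ) < (1+u)/(1-u) := by positivity
    have h := Real.one_sub_inv_le_log_of_pos hq
    rw [Real.log_div (ne_of_gt h1u') (ne_of_gt h1u)] at h
    have hinv : ((1+u)/(1-u))⁻¹ = (1-u)/(1+u) := by rw [inv_div]
    rw [hinv] at h
    have h2 : 6400*u/3687 ≤ 1 - (1-u)/(1+u) := by
      have heq : 1 - (1-u)/(1+u) = 2*u/(1+u) := by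
        field_simp; ring
      rw [heq, div_le_div_iff₀ (by norm_num) h1u']
      nlinarith
    linarith
  have hdec : (1/4 + logistic τ/2) * Real.log (1 + u)
      + (1 - (1/4 + logistic τ/2)) * Real.log (1 - u)
      = (1/2) * (Real.log (1+u) + Real.log (1-u))
        + ((1/4 + logistic τ/2) - 1/2) * (Real.log (1+u) - Real.log (1-u)) := by
    ring
  rw [hdec]
  have hterm2 : (τ/15) * (6400*u/3687) ≤
      ((1/4 + logistic τ/2) - 1/2) * (Real.log (1+u) - Real.log (1-u)) := by
    apply mul_le_mul hs hL2 (by positivity) (by linarith)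
  have hterm1 : -u^2 * (1 - (487/3200:ℝ)^2)⁻¹ / 2 ≤
      (1/2) * (Real.log (1+u) + Real.log (1-u)) := by linarith
  have hnum : τ^2/256 < -u^2 * (1 - (487/3200:ℝ)^2)⁻¹ / 2 + (τ/15) * (6400*u/3687) := by
    rw [hu]
    have hτ2 : 0 < τ^2 := by positivity
    rw [show ((1:ℝ) - (487/3200)^2)⁻¹ = (10240000/10002831 : ℝ) by norm_num]
    nlinarith
  linarith

lemma combine_lin (n S p₀ Lq L1q : ℝ) (h : n*p₀*(Lq - L1q) ≤ S*(Lq - L1q)) :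
    S * ((-Lq) - (-L1q)) + n*(-L1q) ≤ n * (-(1-p₀)*L1q - p₀*Lq) := by nlinarith [h]

set_option maxHeartbeats 1000000 in
/-- Under the hypotheses of Lemma 3 of the paper, the constant classifier with value
`μ⁻¹(1/2 + 487τ/6400)` has strictly smaller cross-entropy loss on `D` than any
`L`-Lipschitz classifier that is nonpositive at some point of `D`. -/
theorem stmt_3 (d : ℕ) (hd : 1 ≤ d) (L τ : ℝ) (hL : 0 < L) (hτ : τ ∈ Set.Ioo (0 : ℝ) 1)
    (D : List (EuclideanSpace ℝ (Fin d) × ℝ)) (hne : D ≠ [])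
    (hlab : ∀ p ∈ D, p.2 = 0 ∨ p.2 = 1)
    (hdiam : ∀ p ∈ D, ∀ q ∈ D, ‖p.1 - q.1‖ ≤ τ ^ 2 / (128 * L))
    (fstar : EuclideanSpace ℝ (Fin d) → ℝ) (hfstar : LipschitzCst L fstar)
    (hgap : ∀ p ∈ D, τ ≤ |fstar p.1|)
    (hpos : ∃ p ∈ D, 0 < fstar p.1)
    (hmean : 1 / 4 + logistic τ / 2 ≤ (D.map Prod.snd).sum / D.length)
    (g : EuclideanSpace ℝ (Fin d) → ℝ)
    (hg : ∀ x, g x = logit (1 / 2 + 487 * τ / 6400))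
    (f : EuclideanSpace ℝ (Fin d) → ℝ) (hf : LipschitzCst L f)
    (hfneg : ∃ p ∈ D, f p.1 ≤ 0) :
    ceLoss g D < ceLoss f D := by
  obtain ⟨hτ0, hτ1⟩ := hτ
  obtain ⟨p0, hp0D, haneg⟩ := hfneg
  set δ : ℝ := τ^2/128 with hδdef
  have hδ0 : 0 ≤ δ := by positivity
  set a : ℝ := f p0.1 with hadef
  set n : ℝ := (D.length : ℝ) with hndef
  have hn : 0 < n := by
    have := List.length_pos_iff.mpr hne
    rw [hndef]; exact_mod_cast this
  set S : ℝ := (D.map Prod.snd).sum with hSdef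
  set q : ℝ := 1/2 + 487*τ/6400 with hqdef
  have hq0 : 0 < q := by rw [hqdef]; nlinarith
  have hq1 : q < 1 := by rw [hqdef]; nlinarith
  have hqhalf : 1/2 < q := by rw [hqdef]; nlinarith
  have hlq : logistic (logit q) = q := logistic_logit hq0 hq1
  -- value of ceLoss g
  have hgD : ceLoss g D = S * ((-Real.log q) - (-Real.log (1-q))) + n * (-Real.log (1-q)) := by
    have hmapeq : (fun p : EuclideanSpace ℝ (Fin d) × ℝ =>
        -p.2 * Real.log (logistic (g p.1)) - (1 - p.2) * Real.log (1 - logistic (g p.1)))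
        = fun p => p.2 * (-Real.log q) + (1 - p.2) * (-Real.log (1-q)) := by
      funext p
      rw [hg, hlq]
      ring
    unfold ceLoss
    rw [hmapeq, sum_affine]
  -- lower bound for ceLoss f
  have hflb : ∀ p ∈ D, a - δ ≤ f p.1 ∧ f p.1 ≤ a + δ := by
    intro p hp
    have h := hf p.1 p0.1
    have hd2 := hdiam p hp p0 hp0D
    have h3 : L * ‖p.1 - p0.1‖ ≤ δ := by
      have := mul_le_mul_of_nonneg_left hd2 hL.le
      calc L * ‖p.1 - p0.1‖ ≤ L * (τ^2/(128*L)) := this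
        _ = δ := by rw [hδdef]; field_simp
    have habs := abs_le.mp (le_trans h h3)
    constructor <;> [linarith [habs.2]; linarith [habs.1]]
  set A1 : ℝ := Real.log (1 + Real.exp (-(a+δ))) with hA1
  set B1 : ℝ := Real.log (1 + Real.exp (a-δ)) with hB1
  have hfD : S * (A1 - B1) + n * B1 ≤ ceLoss f D := by
    rw [← sum_affine D A1 B1]
    unfold ceLoss
    apply List.sum_le_sum
    intro p hp
    rw [term_eq]
    obtain ⟨hl, hu⟩ := hflb p hp
    have hy : 0 ≤ p.2 ∧ p.2 ≤ 1 := by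
      rcases hlab p hp with h|h <;> rw [h] <;> norm_num
    have b1 : A1 ≤ Real.log (1 + Real.exp (-(f p.1))) := sp_le_sp (by linarith)
    have b2 : B1 ≤ Real.log (1 + Real.exp (f p.1)) := sp_le_sp (by linarith)
    have := mul_le_mul_of_nonneg_left b1 hy.1
    have := mul_le_mul_of_nonneg_left b2 (by linarith : (0:ℝ) ≤ 1 - p.2)
    linarith
  -- the mean condition
  have hmean' : n * (1/4 + logistic τ/2) ≤ S := by
    have := (le_div_iff₀ hn).mp hmean
    linarith
  have hlhalf : 1/2 ≤ logistic τ := by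
    rw [logistic, le_div_iff₀ (by positivity)]
    nlinarith [Real.add_one_le_exp τ]
  have hShalf : n/2 ≤ S := by nlinarith
  -- lower bound chain for f
  set M : ℝ := Real.log (1 + Real.exp (-δ)) with hM
  have hmid : 2 * M ≤ A1 + B1 := by
    have h := sp_mid (-(a+δ)) (a-δ)
    have e : ((-(a+δ)) + (a-δ))/2 = -δ := by ring
    rw [e] at h
    linarith
  have hAB : B1 ≤ A1 := sp_le_sp (by linarith)
  have hfinal : n * M ≤ S * (A1 - B1) + n * B1 := by
    nlinarith [mul_nonneg (by linarith : (0:ℝ) ≤ S - n/2) (by linarith : (0:ℝ) ≤ A1 - B1)]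
  -- upper bound for M comparison: log 2 - δ/2 ≤ M
  have hMlb : Real.log 2 - δ/2 ≤ M := by
    have hEE : Real.exp (-(δ/2)) * Real.exp (-(δ/2)) = Real.exp (-δ) := by
      rw [← Real.exp_add]; ring_nf
    have h1 : 2 * Real.exp (-(δ/2)) ≤ 1 + Real.exp (-δ) := by
      nlinarith [sq_nonneg (1 - Real.exp (-(δ/2))), hEE]
    have h2 : Real.log (2 * Real.exp (-(δ/2))) ≤ M := by
      rw [hM]
      exact Real.log_le_log (by positivity) h1
    rw [Real.log_mul (by norm_num) (Real.exp_ne_zero _), Real.log_exp] at h2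
    linarith
  -- key strict inequality: ceLoss g D < n * M
  have hC : 0 < Real.log q - Real.log (1-q) := by
    have h1q2 : 1 - q < q := by rw [hqdef]; nlinarith
    have h1q3 : (0:ℝ) < 1 - q := by rw [hqdef]; nlinarith
    have := Real.log_lt_log h1q3 h1q2
    linarith
  set p₀ : ℝ := 1/4 + logistic τ/2 with hp₀
  have hkey := key_ineq τ hτ0 hτ1
  have hlogq : Real.log q = Real.log (1 + 487*τ/3200) - Real.log 2 := by
    rw [show q = (1 + 487*τ/3200)/2 by rw [hqdef]; ring,
      Real.log_div (by positivity; ) (by norm_num)]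
  have hlog1q : Real.log (1-q) = Real.log (1 - 487*τ/3200) - Real.log 2 := by
    rw [show 1 - q = (1 - 487*τ/3200)/2 by rw [hqdef]; ring,
      Real.log_div (by nlinarith : (1:ℝ) - 487*τ/3200 ≠ 0) (by norm_num)]
  have hstep : -(1-p₀) * Real.log (1-q) - p₀ * Real.log q < Real.log 2 - δ/2 := by
    rw [hlogq, hlog1q]
    have : δ/2 = τ^2/256 := by rw [hδdef]; ring
    rw [this]
    nlinarith [hkey]
  have hgd2 : ceLoss g D < n * M := by
    rw [hgD]
    have hSC : n * p₀ * (Real.log q - Real.log (1-q)) ≤ S * (Real.log q - Real.log (1-q)) := by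
      apply mul_le_mul_of_nonneg_right _ hC.le
      linarith [hmean']
    have : S * ((-Real.log q) - (-Real.log (1-q))) + n * (-Real.log (1-q))
        ≤ n * (-(1-p₀) * Real.log (1-q) - p₀ * Real.log q) := by
      have := combine_lin n S p₀ (Real.log q) (Real.log (1-q)) (by linarith [hSC])
      linarith [this]
    calc S * ((-Real.log q) - (-Real.log (1-q))) + n * (-Real.log (1-q))
        ≤ n * (-(1-p₀) * Real.log (1-q) - p₀ * Real.log q) := this
      _ < n * (Real.log 2 - δ/2) := by
          apply mul_lt_mul_of_pos_left hstep hn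
      _ ≤ n * M := by
          apply mul_le_mul_of_nonneg_left hMlb hn.le
  linarith
end

section
/- Let d ≥ 1, L > 0, τ ∈ (0,1), and let D be a finite nonempty set of points of ℝ^d with ‖x − x'‖₂ ≤ τ²/(128L) for all x, x' ∈ D. Let f⋆, f̃ : ℝ^d → ℝ be L-Lipschitz functions such that |f⋆(x)| ≥ τ for all x ∈ D, f⋆(x̃) > 0 for some x̃ ∈ D, and f̃(x₀) ≤ 0 for some x₀ ∈ D. Then for every x ∈ D: μ(f̃(x)) ≤ 1/2 + τ/128 < 1/2 + 4τ/25 ≤ μ(f⋆(x)). -/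
lemma logistic_mono_s5 : Monotone logistic := by
  intro a b h
  unfold logistic
  have ha := Real.exp_pos a
  have hb := Real.exp_pos b
  rw [div_le_div_iff₀ (by linarith) (by linarith)]
  have := Real.exp_le_exp.2 h
  nlinarith

lemma logistic_upper (z : ℝ) (h0 : 0 ≤ z) (h : z ≤ 1/2) : logistic z ≤ 1/2 + z/2 := by
  have hz := Real.exp_pos z
  have h1 : Real.exp z * (1 - z) ≤ 1 := by
    have h2 : 1 - z ≤ Real.exp (-z) := by
      have := Real.add_one_le_exp (-z); linarith
    calc Real.exp z * (1 - z) ≤ Real.exp z * Real.exp (-z) := by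
            exact mul_le_mul_of_nonneg_left h2 (le_of_lt hz)
      _ = 1 := by rw [← Real.exp_add]; simp
  have h3 : Real.exp z ≤ 1 + 2*z := by nlinarith
  unfold logistic
  rw [div_le_iff₀ (by linarith)]
  nlinarith [Real.add_one_le_exp z]

lemma logistic_lower (τ : ℝ) (h0 : 0 < τ) (h1 : τ < 1) : 1/2 + 4*τ/25 ≤ logistic τ := by
  have hz := Real.exp_pos τ
  unfold logistic
  rw [le_div_iff₀ (by linarith)]
  nlinarith [Real.add_one_le_exp τ]

/-- If all points of the finite nonempty set `D` are within distance `τ²/(128L)` of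
each other, `f⋆` is `L`-Lipschitz with `|f⋆| ≥ τ` on `D` and `f⋆(x̃) > 0` for some
`x̃ ∈ D`, and the `L`-Lipschitz function `f̃` satisfies `f̃(x₀) ≤ 0` for some `x₀ ∈ D`,
then for every `x ∈ D`:
`μ(f̃ x) ≤ 1/2 + τ/128 < 1/2 + 4τ/25 ≤ μ(f⋆ x)`. -/
theorem stmt_5 (d : ℕ) (hd : 1 ≤ d) (L τ : ℝ) (hL : 0 < L) (hτ : τ ∈ Set.Ioo (0 : ℝ) 1)
    (D : Finset (EuclideanSpace ℝ (Fin d))) (hne : D.Nonempty)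
    (hdiam : ∀ x ∈ D, ∀ x' ∈ D, ‖x - x'‖ ≤ τ ^ 2 / (128 * L))
    (fstar ftil : EuclideanSpace ℝ (Fin d) → ℝ)
    (hfstar : LipschitzCst L fstar) (hftil : LipschitzCst L ftil)
    (hgap : ∀ x ∈ D, τ ≤ |fstar x|)
    (hpos : ∃ x ∈ D, 0 < fstar x)
    (hneg : ∃ x ∈ D, ftil x ≤ 0) :
    ∀ x ∈ D,
      logistic (ftil x) ≤ 1 / 2 + τ / 128 ∧
      (1 / 2 + τ / 128 : ℝ) < 1 / 2 + 4 * τ / 25 ∧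
      1 / 2 + 4 * τ / 25 ≤ logistic (fstar x) := by
  obtain ⟨ht0, ht1⟩ := hτ
  obtain ⟨xt, hxt, hxtpos⟩ := hpos
  obtain ⟨x0, hx0, hx0neg⟩ := hneg
  intro x hx
  -- distance bound helper
  have key : ∀ (f : EuclideanSpace ℝ (Fin d) → ℝ), LipschitzCst L f →
      ∀ y ∈ D, |f x - f y| ≤ τ^2 / 128 := by
    intro f hf y hy
    calc |f x - f y| ≤ L * ‖x - y‖ := hf x y
      _ ≤ L * (τ^2 / (128 * L)) := by
          exact mul_le_mul_of_nonneg_left (hdiam x hx y hy) (le_of_lt hL)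
      _ = τ^2 / 128 := by field_simp
  have hsq : τ^2 / 128 ≤ τ / 128 := by nlinarith
  -- upper bound for ftil
  have h1 : ftil x ≤ τ^2 / 128 := by
    have := key ftil hftil x0 hx0
    have := abs_le.1 this
    linarith [this.2]
  have hub : logistic (ftil x) ≤ 1 / 2 + τ / 128 := by
    calc logistic (ftil x) ≤ logistic (τ^2/128) := logistic_mono_s5 h1
      _ ≤ 1/2 + (τ^2/128)/2 := logistic_upper _ (by positivity) (by nlinarith)
      _ ≤ 1/2 + τ/128 := by nlinarith
  -- lower bound for fstar
  have hxtτ : τ ≤ fstar xt := by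
    have := hgap xt hxt
    rcases abs_cases (fstar xt) with ⟨h, _⟩ | ⟨h, _⟩ <;> linarith
  have hxpos : 0 < fstar x := by
    have := key fstar hfstar xt hxt
    have := abs_le.1 this
    nlinarith [this.1]
  have hxτ : τ ≤ fstar x := by
    have := hgap x hx
    rcases abs_cases (fstar x) with ⟨h, _⟩ | ⟨h, _⟩ <;> linarith
  have hlb : 1 / 2 + 4 * τ / 25 ≤ logistic (fstar x) := by
    calc (1/2 + 4*τ/25 : ℝ) ≤ logistic τ := logistic_lower τ ht0 ht1
      _ ≤ logistic (fstar x) := logistic_mono_s5 hxτ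
  exact ⟨hub, by nlinarith, hlb⟩
end

section
/- Let (X_ℓ)_{ℓ≥1} be an i.i.d. sequence of ℝ^d-valued random vectors with common law P_X, let S ⊆ ℝ^d be a measurable set, let p_min ∈ (0,1] satisfy P_X(S) ≥ p_min, and let δ ∈ (0,1). Then with probability at least 1 − δ, simultaneously for all integers t ≥ (256/p_min²)·ln(768/(p_min²·δ)): Σ_{ℓ=1}^t 1{X_ℓ ∈ S} ≥ (p_min/2)·t. -/
open MeasureTheory ProbabilityTheory
open scoped Classical

private lemma stmt_8_tail {Ω : Type*} [MeasureSpace Ω] [IsProbabilityMeasure (ℙ : Measure Ω)]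
    {d : ℕ} (X : ℕ → Ω → EuclideanSpace ℝ (Fin d))
    (hmeas : ∀ i, Measurable (X i))
    (hindep : iIndepFun X ℙ)
    (hident : ∀ i, IdentDistrib (X i) (X 1) ℙ ℙ)
    (S : Set (EuclideanSpace ℝ (Fin d))) (hS : MeasurableSet S)
    (pmin : ℝ) (hpmin : pmin ∈ Set.Ioc (0 : ℝ) 1)
    (hPS : pmin ≤ (ℙ (X 1 ⁻¹' S)).toReal) (t : ℕ) :
    ℙ {ω | ∑ ℓ ∈ Finset.Icc 1 t, (if X ℓ ω ∈ S then (1 : ℝ) else 0) < pmin / 2 * t}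
      ≤ ENNReal.ofReal (Real.exp (-(pmin/8) * t)) := by
  set g : EuclideanSpace ℝ (Fin d) → ℝ := fun x => if x ∈ S then (-1:ℝ) else 0 with hg
  set Z : ℕ → Ω → ℝ := fun ℓ => g ∘ X ℓ with hZ
  have hgmeas : Measurable g := Measurable.ite hS measurable_const measurable_const
  have hZmeas : ∀ ℓ, Measurable (Z ℓ) := fun ℓ => hgmeas.comp (hmeas ℓ)
  have hZindep : iIndepFun Z ℙ :=
    hindep.comp (fun _ => g) (fun _ => hgmeas)
  set p : ℝ := (ℙ (X 1 ⁻¹' S)).toReal with hp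
  have hp1 : p ≤ 1 := by
    rw [hp]
    exact ENNReal.toReal_le_of_le_ofReal one_pos.le (by simpa using prob_le_one)
  have hpm0 : 0 < pmin := hpmin.1
  have hpm1 : pmin ≤ 1 := hpmin.2
  have hmgfZ : ∀ ℓ, mgf (Z ℓ) ℙ (1/2) = 1 + p * (Real.exp (-(1/2)) - 1) := by
    intro ℓ
    have hsℓ : MeasurableSet (X ℓ ⁻¹' S) := (hmeas ℓ) hS
    have hfe : (fun ω => Real.exp ((1/2) * Z ℓ ω))
        = fun ω => 1 + (X ℓ ⁻¹' S).indicator (fun _ => Real.exp (-(1/2)) - 1) ω := by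
      funext ω
      by_cases h : X ℓ ω ∈ S
      · rw [Set.indicator_of_mem (show ω ∈ X ℓ ⁻¹' S from h)]
        simp only [hZ, hg, Function.comp_apply, if_pos h]
        norm_num
      · rw [Set.indicator_of_notMem (show ω ∉ X ℓ ⁻¹' S from h)]
        simp only [hZ, hg, Function.comp_apply, if_neg h]
        norm_num
    rw [mgf, hfe, integral_add (integrable_const 1)
        ((integrable_const _).indicator hsℓ), integral_const,
      integral_indicator_const _ hsℓ]
    have hmeq : ℙ (X ℓ ⁻¹' S) = ℙ (X 1 ⁻¹' S) := (hident ℓ).measure_mem_eq hS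
    simp [measureReal_def, hmeq, smul_eq_mul, mul_comm, hp]
  have hea : Real.exp (-(1/2)) ≤ 5/8 := by
    have h1 : Real.exp (-(1/2)) ^ 2 = Real.exp (-1) := by
      rw [sq, ← Real.exp_add]; norm_num
    have h2 : Real.exp (-1) ≤ (5/8)^2 := by
      have := Real.exp_one_gt_d9
      have h3 : Real.exp (-1) = (Real.exp 1)⁻¹ := by
        rw [Real.exp_neg]
      rw [h3]
      rw [inv_le_iff_one_le_mul₀ (Real.exp_pos 1)]
      nlinarith
    nlinarith [Real.exp_pos (-(1/2))]
  have hpmp : pmin ≤ p := hPS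
  have hmgfle : 1 + p * (Real.exp (-(1/2)) - 1) ≤ Real.exp (-(3/8) * pmin) := by
    have h4 : 1 + p * (Real.exp (-(1/2)) - 1) ≤ 1 + (-(3/8) * pmin) := by
      nlinarith [Real.exp_pos (-(1/2))]
    exact h4.trans (by linarith [Real.add_one_le_exp (-(3/8) * pmin)])
  have hmgf0 : 0 ≤ 1 + p * (Real.exp (-(1/2)) - 1) := by
    nlinarith [Real.exp_pos (-(1/2)), ENNReal.toReal_nonneg (a := ℙ (X 1 ⁻¹' S))]
  set W : Ω → ℝ := ∑ ℓ ∈ Finset.Icc 1 t, Z ℓ with hW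
  have hWmeas : Measurable W := by
    have he : W = fun a => ∑ ℓ ∈ Finset.Icc 1 t, Z ℓ a := by
      funext a; rw [hW, Finset.sum_apply]
    rw [he]; exact Finset.measurable_sum _ fun ℓ _ => hZmeas ℓ
  have hWle : ∀ ω, W ω ≤ 0 := by
    intro ω
    rw [hW, Finset.sum_apply]
    apply Finset.sum_nonpos
    intro ℓ _
    simp only [hZ, hg, Function.comp_apply]
    split <;> norm_num
  have hint : Integrable (fun ω => Real.exp ((1/2) * W ω)) ℙ := by
    apply Integrable.mono' (integrable_const (1:ℝ))
      ((hWmeas.const_mul _).exp.aestronglyMeasurable)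
    filter_upwards with ω
    rw [Real.norm_eq_abs, Real.abs_exp, Real.exp_le_one_iff]
    nlinarith [hWle ω]
  have chern := measure_ge_le_exp_mul_mgf (μ := ℙ) (X := W) (-(pmin/2 * t))
    (by norm_num : (0:ℝ) ≤ 1/2) hint
  have hmgfsum : mgf W ℙ (1/2) = (1 + p * (Real.exp (-(1/2)) - 1)) ^ t := by
    rw [hW, hZindep.mgf_sum hZmeas]
    rw [Finset.prod_congr rfl (fun ℓ _ => hmgfZ ℓ), Finset.prod_const,
      Nat.card_Icc]
    norm_num
  have hbound : (ℙ {ω | -(pmin/2 * t) ≤ W ω}).toReal ≤ Real.exp (-(pmin/8) * t) := by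
    refine chern.trans ?_
    rw [hmgfsum]
    have h5 : (1 + p * (Real.exp (-(1/2)) - 1)) ^ t ≤ Real.exp (-(3/8) * pmin) ^ t :=
      pow_le_pow_left₀ hmgf0 hmgfle t
    have h6 : Real.exp (-(3/8) * pmin) ^ t = Real.exp (-(3/8) * pmin * t) := by
      rw [← Real.exp_nat_mul]; ring_nf
    calc Real.exp (-(1/2) * -(pmin/2 * t)) * (1 + p * (Real.exp (-(1/2)) - 1)) ^ t
        ≤ Real.exp (-(1/2) * -(pmin/2 * t)) * Real.exp (-(3/8) * pmin * t) := by
          rw [h6] at h5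
          exact mul_le_mul_of_nonneg_left h5 (Real.exp_pos _).le
      _ = Real.exp (-(pmin/8) * t) := by rw [← Real.exp_add]; ring_nf
  have hsub : {ω | ∑ ℓ ∈ Finset.Icc 1 t, (if X ℓ ω ∈ S then (1:ℝ) else 0) < pmin / 2 * t}
      ⊆ {ω | -(pmin/2 * t) ≤ W ω} := by
    intro ω hω
    simp only [Set.mem_setOf_eq] at hω ⊢
    have hWeq : W ω = -(∑ ℓ ∈ Finset.Icc 1 t, (if X ℓ ω ∈ S then (1:ℝ) else 0)) := by
      rw [hW, Finset.sum_apply, ← Finset.sum_neg_distrib]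
      apply Finset.sum_congr rfl
      intro ℓ _
      simp only [hZ, hg, Function.comp_apply]
      split <;> norm_num
    rw [hWeq]
    linarith
  calc ℙ _ ≤ ℙ {ω | -(pmin/2 * t) ≤ W ω} := measure_mono hsub
    _ = ENNReal.ofReal ((ℙ {ω | -(pmin/2 * t) ≤ W ω}).toReal) :=
        (ENNReal.ofReal_toReal (measure_ne_top _ _)).symm
    _ ≤ ENNReal.ofReal (Real.exp (-(pmin/8) * t)) := ENNReal.ofReal_le_ofReal hbound

/-- For an i.i.d. sequence `(X_ℓ)_{ℓ≥1}` with values in `ℝ^d`, a measurable set `S`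
with `P_X(S) ≥ p_min`, and `δ ∈ (0,1)`: with probability at least `1 − δ`,
simultaneously for all integers `t ≥ (256/p_min²)·ln(768/(p_min²·δ))`,
`Σ_{ℓ=1}^t 1{X_ℓ ∈ S} ≥ (p_min/2)·t`. -/
theorem stmt_8 (d : ℕ) (hd : 1 ≤ d)
    {Ω : Type*} [MeasureSpace Ω] [IsProbabilityMeasure (ℙ : Measure Ω)]
    (X : ℕ → Ω → EuclideanSpace ℝ (Fin d))
    (hmeas : ∀ i, Measurable (X i))
    (hindep : iIndepFun X ℙ)
    (hident : ∀ i, IdentDistrib (X i) (X 1) ℙ ℙ)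
    (S : Set (EuclideanSpace ℝ (Fin d))) (hS : MeasurableSet S)
    (pmin : ℝ) (hpmin : pmin ∈ Set.Ioc (0 : ℝ) 1)
    (hPS : pmin ≤ (ℙ (X 1 ⁻¹' S)).toReal)
    (δ : ℝ) (hδ : δ ∈ Set.Ioo (0 : ℝ) 1) :
    ENNReal.ofReal (1 - δ) ≤
      ℙ {ω | ∀ t : ℕ, 256 / pmin ^ 2 * Real.log (768 / (pmin ^ 2 * δ)) ≤ (t : ℝ) →
          pmin / 2 * (t : ℝ) ≤
            ∑ ℓ ∈ Finset.Icc 1 t, (if X ℓ ω ∈ S then (1 : ℝ) else 0)} := by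
  have key := stmt_8_tail X hmeas hindep hident S hS pmin hpmin hPS
  have hpm0 : 0 < pmin := hpmin.1
  have hpm1 : pmin ≤ 1 := hpmin.2
  have hδ0 : 0 < δ := hδ.1
  have hδ1 : δ < 1 := hδ.2
  set c : ℝ := pmin / 8 with hc
  set y : ℝ := 768 / (pmin ^ 2 * δ) with hy
  set T : ℝ := 256 / pmin ^ 2 * Real.log y with hT
  set N : ℕ := ⌈T⌉₊ with hN
  set A : ℕ → Set Ω := fun t =>
    {ω | ∑ ℓ ∈ Finset.Icc 1 t, (if X ℓ ω ∈ S then (1:ℝ) else 0) < pmin / 2 * t} with hA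
  set G : Set Ω := {ω | ∀ t : ℕ, T ≤ (t : ℝ) →
      pmin / 2 * (t : ℝ) ≤ ∑ ℓ ∈ Finset.Icc 1 t, (if X ℓ ω ∈ S then (1 : ℝ) else 0)} with hG
  have hy1 : 1 < y := by
    rw [hy, lt_div_iff₀ (by positivity)]
    nlinarith [sq_nonneg pmin, sq_nonneg (1 - pmin)]
  have hlogy : 0 < Real.log y := Real.log_pos hy1
  have hTpos : 0 < T := by
    rw [hT]; positivity
  have hTN : T ≤ N := Nat.le_ceil T
  have hc0 : 0 < c := by rw [hc]; positivity
  have hec1 : Real.exp (-c) < 1 := by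
    rw [Real.exp_lt_one_iff]; linarith
  have hecpos : 0 < Real.exp (-c) := Real.exp_pos _
  have heq : (fun k : ℕ => Real.exp (-c * (N + k)))
      = fun k : ℕ => Real.exp (-c * N) * Real.exp (-c) ^ k := by
    funext k
    rw [← Real.exp_nat_mul, ← Real.exp_add]
    ring_nf
  have hsummable : Summable (fun k : ℕ => Real.exp (-c * (N + k))) := by
    rw [heq]
    exact (summable_geometric_of_lt_one hecpos.le hec1).mul_left _
  have htsum : ∑' k : ℕ, Real.exp (-c * (N + k))
      = Real.exp (-c * N) * (1 - Real.exp (-c))⁻¹ := by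
    rw [heq, tsum_mul_left, tsum_geometric_of_lt_one hecpos.le hec1]
  have hden : pmin / 9 ≤ 1 - Real.exp (-c) := by
    have h1 : Real.exp (-c) ≤ (1 + c)⁻¹ := by
      rw [Real.exp_neg]
      exact inv_anti₀ (by linarith) (by linarith [Real.add_one_le_exp c])
    have h2 : (0:ℝ) < 1 + c := by linarith
    have h3 : (1 + c) * (1 + c)⁻¹ = 1 := mul_inv_cancel₀ h2.ne'
    rw [hc] at *
    nlinarith [h1, h3]
  have hdenpos : 0 < 1 - Real.exp (-c) := lt_of_lt_of_le (by positivity) hden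
  have hexpN : Real.exp (-c * N) ≤ (y ^ 32)⁻¹ := by
    have h1 : 32 * Real.log y ≤ c * N := by
      have h2 : 32 * Real.log y ≤ c * T := by
        rw [hc, hT]
        rw [div_mul_eq_mul_div, le_div_iff₀ (by norm_num : (0:ℝ) < 8)]
        have h3 : pmin * (256 / pmin ^ 2 * Real.log y) = 256 * Real.log y / pmin := by
          field_simp
        rw [h3, le_div_iff₀ hpm0]
        nlinarith
      have h4 : c * T ≤ c * N := mul_le_mul_of_nonneg_left hTN hc0.le
      linarith
    have h5 : Real.exp (-c * N) ≤ Real.exp (-(32 * Real.log y)) := by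
      apply Real.exp_le_exp.mpr; linarith
    refine h5.trans ?_
    rw [Real.exp_neg]
    rw [inv_le_inv₀ (Real.exp_pos _) (by positivity)]
    have h6 : y ^ 32 = Real.exp (Real.log y) ^ 32 := by
      rw [Real.exp_log (by linarith : (0:ℝ) < y)]
    rw [h6, ← Real.exp_nat_mul]
    norm_num
  have hfinal : Real.exp (-c * N) * (1 - Real.exp (-c))⁻¹ ≤ δ := by
    have hy32pos : (0:ℝ) < y ^ 32 := by positivity
    have h7 : (1 - Real.exp (-c))⁻¹ ≤ 9 / pmin := by
      rw [show (9:ℝ)/pmin = (pmin/9)⁻¹ by rw [inv_div]]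
      exact inv_anti₀ (by positivity) hden
    have h8 : Real.exp (-c * N) * (1 - Real.exp (-c))⁻¹ ≤ (y ^ 32)⁻¹ * (9 / pmin) :=
      mul_le_mul hexpN h7 (by positivity) (by positivity)
    refine h8.trans ?_
    have hy31 : (1:ℝ) ≤ y ^ 31 := one_le_pow₀ hy1.le
    have hpdy : pmin * δ * y = 768 / pmin := by
      rw [hy]; field_simp
    have h9 : 9 / pmin ≤ δ * y ^ 32 := by
      rw [div_le_iff₀ hpm0]
      have h10 : δ * y ^ 32 * pmin = (pmin * δ * y) * y ^ 31 := by ring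
      rw [h10, hpdy]
      have h11 : (768:ℝ) ≤ 768 / pmin := by
        rw [le_div_iff₀ hpm0]; nlinarith
      nlinarith
    calc (y ^ 32)⁻¹ * (9 / pmin) ≤ (y ^ 32)⁻¹ * (δ * y ^ 32) :=
          mul_le_mul_of_nonneg_left h9 (by positivity)
      _ = δ := by field_simp
  -- union bound
  have hGc : Gᶜ ⊆ ⋃ k : ℕ, A (N + k) := by
    intro ω hω
    simp only [hG, Set.mem_compl_iff, Set.mem_setOf_eq, not_forall, not_le] at hω
    obtain ⟨t, h1, h2⟩ := hω
    have hNt : N ≤ t := by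
      rw [hN]; exact Nat.ceil_le.mpr h1
    refine Set.mem_iUnion.mpr ⟨t - N, ?_⟩
    have : N + (t - N) = t := by omega
    rw [hA]
    simp only [Set.mem_setOf_eq, this]
    exact h2
  have hGcle : ℙ Gᶜ ≤ ENNReal.ofReal δ := by
    calc ℙ Gᶜ ≤ ℙ (⋃ k : ℕ, A (N + k)) := measure_mono hGc
      _ ≤ ∑' k : ℕ, ℙ (A (N + k)) := measure_iUnion_le _
      _ ≤ ∑' k : ℕ, ENNReal.ofReal (Real.exp (-c * (N + k))) := by
          apply ENNReal.tsum_le_tsum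
          intro k
          have := key (N + k)
          rw [hc]
          convert this using 3
          push_cast
          ring
      _ = ENNReal.ofReal (∑' k : ℕ, Real.exp (-c * (N + k))) :=
          (ENNReal.ofReal_tsum_of_nonneg (fun k => (Real.exp_pos _).le) hsummable).symm
      _ = ENNReal.ofReal (Real.exp (-c * N) * (1 - Real.exp (-c))⁻¹) := by rw [htsum]
      _ ≤ ENNReal.ofReal δ := ENNReal.ofReal_le_ofReal hfinal
  have huniv : (1 : ENNReal) ≤ ℙ G + ℙ Gᶜ := by
    have h := measure_union_le (μ := ℙ) G Gᶜ
    rw [Set.union_compl_self, measure_univ] at h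
    exact h
  have h1δ : ENNReal.ofReal (1 - δ) = 1 - ENNReal.ofReal δ := by
    rw [ENNReal.ofReal_sub 1 hδ0.le, ENNReal.ofReal_one]
  rw [show ℙ {ω | ∀ t : ℕ, 256 / pmin ^ 2 * Real.log (768 / (pmin ^ 2 * δ)) ≤ (t : ℝ) →
          pmin / 2 * (t : ℝ) ≤
            ∑ ℓ ∈ Finset.Icc 1 t, (if X ℓ ω ∈ S then (1 : ℝ) else 0)} = ℙ G from rfl]
  rw [h1δ]
  refine tsub_le_iff_right.mpr ?_
  calc (1 : ENNReal) ≤ ℙ G + ℙ Gᶜ := huniv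
    _ ≤ ℙ G + ENNReal.ofReal δ := by gcongr
end

section
/- Let (X_ℓ, Y_ℓ)_{ℓ≥1} be an i.i.d. sequence of random pairs with values in ℝ^d × {0,1}, let S ⊆ ℝ^d be measurable, let τ ∈ (0,1), p ∈ (0,1], δ ∈ (0,1), and assume P(X₁ ∈ S) ≥ p and P(Y₁ = 1 | X₁ ∈ S) ≤ μ(−τ). Set κ = 1/8 − μ(−τ)/4 (note κ > 0 since μ(−τ) < 1/2). Then with probability at least 1 − 3δ, simultaneously for all integers t ≥ (256/(κ²p²))·ln(768/(κ²p²δ)): Σ_{ℓ=1}^t 1{X_ℓ ∈ S} > 0 and Σ_{ℓ=1}^t Y_ℓ·1{X_ℓ ∈ S} ≤ (1/8 + 3μ(−τ)/4)·Σ_{ℓ=1}^t 1{X_ℓ ∈ S}. -/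
open MeasureTheory ProbabilityTheory
open scoped Classical

open scoped ENNReal

lemma exp_neg_le_quad {s : ℝ} (hs : 0 ≤ s) : Real.exp (-s) ≤ 1 - s + s ^ 2 := by
  have h1 : s + 1 ≤ Real.exp s := Real.add_one_le_exp s
  have h2 : (0:ℝ) < 1 + s := by linarith
  have h3 : Real.exp (-s) ≤ (1 + s)⁻¹ := by
    rw [Real.exp_neg]; exact inv_anti₀ h2 (by linarith)
  refine h3.trans ?_
  rw [inv_le_iff_one_le_mul₀ h2]
  nlinarith [pow_nonneg hs 3]

lemma exp_le_quad {s : ℝ} (hs : 0 ≤ s) (hs2 : s ≤ 1/2) : Real.exp s ≤ 1 + s + 2 * s ^ 2 := by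
  have h1 : 1 - s ≤ Real.exp (-s) := by
    have := Real.add_one_le_exp (-s); linarith
  have h2 : (0:ℝ) < 1 - s := by linarith
  have h3 : Real.exp s ≤ (1 - s)⁻¹ := by
    have : Real.exp s = (Real.exp (-s))⁻¹ := by
      rw [Real.exp_neg, inv_inv]
    rw [this]
    exact inv_anti₀ h2 h1
  refine h3.trans ?_
  rw [inv_le_iff_one_le_mul₀ h2]
  nlinarith

lemma bern_mgf {Ω : Type*} [MeasureSpace Ω] [IsProbabilityMeasure (ℙ : Measure Ω)]
    {f : Ω → ℝ} {A : Set Ω} (hA : MeasurableSet A)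
    (hf : f = A.indicator (fun _ => (1:ℝ))) (s : ℝ) :
    mgf f ℙ s = 1 + (Real.exp s - 1) * (ℙ A).toReal := by
  have hint : Integrable f ℙ := hf ▸ (integrable_const (1:ℝ)).indicator hA
  have hpt : ∀ ω, Real.exp (s * f ω) = 1 + (Real.exp s - 1) * f ω := by
    intro ω
    by_cases h : ω ∈ A <;> simp [hf, Set.indicator_apply, h]
  have hIf : ∫ ω, f ω ∂ℙ = (ℙ A).toReal := by
    rw [hf]; exact integral_indicator_one (μ := (ℙ : Measure Ω)) hA
  calc mgf f ℙ s = ∫ ω, (1 + (Real.exp s - 1) * f ω) ∂ℙ := by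
        unfold mgf; exact integral_congr_ae (Filter.Eventually.of_forall hpt)
    _ = 1 + (Real.exp s - 1) * (ℙ A).toReal := by
        rw [integral_add (integrable_const 1) (hint.const_mul _), integral_const,
          MeasureTheory.integral_const_mul, hIf]
        simp

lemma bern_exp_integrable {Ω : Type*} [MeasureSpace Ω] [IsProbabilityMeasure (ℙ : Measure Ω)]
    {f : Ω → ℝ} {A : Set Ω} (hA : MeasurableSet A)
    (hf : f = A.indicator (fun _ => (1:ℝ))) (s : ℝ) :
    Integrable (fun ω => Real.exp (s * f ω)) ℙ := by
  have hint : Integrable f ℙ := hf ▸ (integrable_const (1:ℝ)).indicator hA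
  have hpt : ∀ ω, Real.exp (s * f ω) = 1 + (Real.exp s - 1) * f ω := by
    intro ω
    by_cases h : ω ∈ A <;> simp [hf, Set.indicator_apply, h]
  exact ((integrable_const 1).add (hint.const_mul _)).congr
    (Filter.Eventually.of_forall fun ω => (hpt ω).symm)

lemma lem_one_sub_exp {a : ℝ} (ha0 : 0 < a) (ha1 : a ≤ 1/2)
    (hquad : Real.exp (-a) ≤ 1 - a + a ^ 2) : a / 2 ≤ 1 - Real.exp (-a) := by
  nlinarith

lemma lem_y1 {κ p δ : ℝ} (hκ2 : κ ^ 2 ≤ 1) (hp2 : p ^ 2 ≤ 1) (hδ0 : 0 < δ) (hδ1 : δ < 1)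
    (hκP2 : 0 < κ ^ 2 * p ^ 2) : κ ^ 2 * p ^ 2 * δ / 768 ≤ 1 := by
  rw [div_le_one (by norm_num)]
  nlinarith

lemma lem_aT {κ p L : ℝ} (hκ : κ ≠ 0) (hp : p ≠ 0) :
    (κ * p / 2) ^ 2 / 8 * (256 / (κ ^ 2 * p ^ 2) * L) = 8 * L := by
  field_simp
  ring

lemma lem_d6 {κ p δ : ℝ} (hκ : κ ≠ 0) (hp : p ≠ 0) :
    2 * (κ ^ 2 * p ^ 2 * δ / 768) * ((κ * p / 2) ^ 2 / 8 / 2)⁻¹ = δ / 6 := by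
  field_simp
  ring

lemma lem_eps_lt_q {κ p q ε : ℝ} (hκ0 : 0 < κ) (hκ8 : κ ≤ 1/8) (hp0 : 0 < p) (hPS : p ≤ q)
    (hε : ε = κ * p / 2) : ε < q := by
  nlinarith

lemma lem_epskq {κ p q ε : ℝ} (hκ0 : 0 < κ) (hp0 : 0 < p) (hPS : p ≤ q)
    (hε : ε = κ * p / 2) : 2 * ε ≤ κ * q := by
  nlinarith

lemma lem_step {m κ q r ε : ℝ} (hr1 : r ≤ m * q) (hεκq : 2 * ε ≤ κ * q) (hε0 : 0 ≤ ε)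
    (hm2 : m < 1/2) (hκ8 : κ ≤ 1/8) : r + ε ≤ (m + κ) * (q - ε) := by
  nlinarith


set_option maxHeartbeats 4000000 in
/-- For an i.i.d. sequence `(X_ℓ, Y_ℓ)_{ℓ≥1}` with values in `ℝ^d × {0,1}`, a
measurable `S` with `P(X₁ ∈ S) ≥ p` and `P(Y₁ = 1 | X₁ ∈ S) ≤ μ(−τ)`, setting
`κ = 1/8 − μ(−τ)/4`: with probability at least `1 − 3δ`, simultaneously for all
integers `t ≥ (256/(κ²p²))·ln(768/(κ²p²δ))`, we have `Σ_{ℓ=1}^t 1{X_ℓ ∈ S} > 0` and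
`Σ_{ℓ=1}^t Y_ℓ·1{X_ℓ ∈ S} ≤ (1/8 + 3μ(−τ)/4)·Σ_{ℓ=1}^t 1{X_ℓ ∈ S}`. -/
theorem stmt_10 (d : ℕ) (hd : 1 ≤ d)
    {Ω : Type*} [MeasureSpace Ω] [IsProbabilityMeasure (ℙ : Measure Ω)]
    (X : ℕ → Ω → EuclideanSpace ℝ (Fin d)) (Y : ℕ → Ω → ℝ)
    (hmeasX : ∀ i, Measurable (X i)) (hmeasY : ∀ i, Measurable (Y i))
    (hlab : ∀ i ω, Y i ω = 0 ∨ Y i ω = 1)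
    (hindep : iIndepFun (fun i ω => (X i ω, Y i ω)) ℙ)
    (hident : ∀ i, IdentDistrib (fun ω => (X i ω, Y i ω)) (fun ω => (X 1 ω, Y 1 ω)) ℙ ℙ)
    (S : Set (EuclideanSpace ℝ (Fin d))) (hS : MeasurableSet S)
    (τ p δ : ℝ) (hτ : τ ∈ Set.Ioo (0 : ℝ) 1) (hp : p ∈ Set.Ioc (0 : ℝ) 1)
    (hδ : δ ∈ Set.Ioo (0 : ℝ) 1)
    (hPS : p ≤ (ℙ (X 1 ⁻¹' S)).toReal)
    (hcond : (ℙ (X 1 ⁻¹' S ∩ {ω | Y 1 ω = 1})).toReal ≤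
      logistic (-τ) * (ℙ (X 1 ⁻¹' S)).toReal)
    (κ : ℝ) (hκ : κ = 1 / 8 - logistic (-τ) / 4) :
    ENNReal.ofReal (1 - 3 * δ) ≤
      ℙ {ω | ∀ t : ℕ,
          256 / (κ ^ 2 * p ^ 2) * Real.log (768 / (κ ^ 2 * p ^ 2 * δ)) ≤ (t : ℝ) →
          0 < ∑ ℓ ∈ Finset.Icc 1 t, (if X ℓ ω ∈ S then (1 : ℝ) else 0) ∧
          ∑ ℓ ∈ Finset.Icc 1 t, Y ℓ ω * (if X ℓ ω ∈ S then (1 : ℝ) else 0) ≤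
            (1 / 8 + 3 * logistic (-τ) / 4) *
              ∑ ℓ ∈ Finset.Icc 1 t, (if X ℓ ω ∈ S then (1 : ℝ) else 0)} := by
  -- basic notation
  set m : ℝ := logistic (-τ) with hm_def
  have hm0 : 0 < m := by
    have := Real.exp_pos (-τ); have h2 := Real.exp_pos (-τ)
    unfold m; unfold logistic; positivity
  have hm2 : m < 1 / 2 := by
    unfold m; unfold logistic
    have he : Real.exp (-τ) < 1 := by
      rw [Real.exp_lt_one_iff]; linarith [hτ.1]
    have hpos : (0:ℝ) < 1 + Real.exp (-τ) := by positivity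
    rw [div_lt_iff₀ hpos]; linarith
  have hκ0 : 0 < κ := by rw [hκ]; linarith
  have hκ8 : κ ≤ 1 / 8 := by rw [hκ]; linarith
  set q : ℝ := (ℙ (X 1 ⁻¹' S)).toReal with hq_def
  set r : ℝ := (ℙ (X 1 ⁻¹' S ∩ {ω | Y 1 ω = 1})).toReal with hr_def
  have hq1 : q ≤ 1 := by
    have h := prob_le_one (μ := (ℙ : Measure Ω)) (s := X 1 ⁻¹' S)
    calc q ≤ (1 : ℝ≥0∞).toReal := ENNReal.toReal_mono ENNReal.one_ne_top h
      _ = 1 := by simp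
  have hq0 : 0 < q := lt_of_lt_of_le hp.1 hPS
  have hr0 : 0 ≤ r := ENNReal.toReal_nonneg
  have hr1 : r ≤ m * q := hcond
  -- epsilon and friends
  set ε : ℝ := κ * p / 2 with hε_def
  have hε0 : 0 < ε := by rw [hε_def]; exact div_pos (mul_pos hκ0 hp.1) two_pos
  have hε16 : ε ≤ 1 / 16 := by nlinarith [hp.2, hp.1, hκ0]
  set s : ℝ := ε / 4 with hs_def
  have hs0 : 0 < s := by rw [hs_def]; positivity
  set a : ℝ := ε ^ 2 / 8 with ha_def
  have ha0 : 0 < a := by rw [ha_def]; positivity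
  have ha1 : a ≤ 1 / 2 := by nlinarith
  set c : ℝ := 1 / 8 + 3 * m / 4 with hc_def
  have hc0 : 0 < c := by rw [hc_def]; linarith
  have hc1 : c ≤ 1 / 2 := by linarith
  have hcm : c = m + κ := by rw [hκ]; ring
  -- the indicator random variables
  set Z : ℕ → Ω → ℝ := fun i => (X i ⁻¹' S).indicator (fun _ => (1:ℝ)) with hZ_def
  set W : ℕ → Ω → ℝ := fun i =>
    ((fun ω => (X i ω, Y i ω)) ⁻¹' (S ×ˢ ({1} : Set ℝ))).indicator (fun _ => (1:ℝ)) with hW_def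
  have hZmeas : ∀ i, Measurable (Z i) := fun i =>
    measurable_const.indicator ((hmeasX i) hS)
  have hprodmeas : MeasurableSet (S ×ˢ ({1} : Set ℝ)) := hS.prod (measurableSet_singleton 1)
  have hpairmeas : ∀ i, Measurable (fun ω => (X i ω, Y i ω)) := fun i =>
    (hmeasX i).prodMk (hmeasY i)
  have hWmeas : ∀ i, Measurable (W i) := fun i =>
    measurable_const.indicator ((hpairmeas i) hprodmeas)
  -- independence of the derived families
  have hZindep : iIndepFun Z ℙ := by
    have hcomp := hindep.comp
      (fun _ pv => (S ×ˢ (Set.univ : Set ℝ)).indicator (fun _ => (1:ℝ)) pv)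
      (fun _ => measurable_const.indicator (hS.prod MeasurableSet.univ))
    have heq : (fun i => (fun pv : (EuclideanSpace ℝ (Fin d)) × ℝ =>
        (S ×ˢ (Set.univ : Set ℝ)).indicator (fun _ => (1:ℝ)) pv) ∘ (fun ω => (X i ω, Y i ω))) = Z := by
      funext i ω
      by_cases h : X i ω ∈ S <;>
        simp [hZ_def, Set.indicator_apply, h, Function.comp, Set.mem_prod]
    rwa [heq] at hcomp
  have hWindep : iIndepFun W ℙ := by
    have hcomp := hindep.comp
      (fun _ pv => (S ×ˢ ({1} : Set ℝ)).indicator (fun _ => (1:ℝ)) pv)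
      (fun _ => measurable_const.indicator hprodmeas)
    have heq : (fun i => (fun pv : (EuclideanSpace ℝ (Fin d)) × ℝ =>
        (S ×ˢ ({1} : Set ℝ)).indicator (fun _ => (1:ℝ)) pv) ∘ (fun ω => (X i ω, Y i ω))) = W := by
      funext i ω
      simp [hW_def, Set.indicator_apply, Function.comp]
    rwa [heq] at hcomp
  -- identical distribution of the marginals
  have hqi : ∀ i, ℙ (X i ⁻¹' S) = ENNReal.ofReal q := by
    intro i
    have h := (hident i).measure_mem_eq (hS.prod (MeasurableSet.univ : MeasurableSet (Set.univ : Set ℝ)))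
    have h1 : (fun ω => (X i ω, Y i ω)) ⁻¹' (S ×ˢ (Set.univ : Set ℝ)) = X i ⁻¹' S := by
      ext ω; simp
    have h2 : (fun ω => (X 1 ω, Y 1 ω)) ⁻¹' (S ×ˢ (Set.univ : Set ℝ)) = X 1 ⁻¹' S := by
      ext ω; simp
    rw [h1, h2] at h
    rw [h, hq_def, ENNReal.ofReal_toReal (measure_ne_top _ _)]
  have hri : ∀ i, ℙ ((fun ω => (X i ω, Y i ω)) ⁻¹' (S ×ˢ ({1} : Set ℝ))) = ENNReal.ofReal r := by
    intro i
    have h := (hident i).measure_mem_eq hprodmeas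
    have h2 : (fun ω => (X 1 ω, Y 1 ω)) ⁻¹' (S ×ˢ ({1} : Set ℝ)) = X 1 ⁻¹' S ∩ {ω | Y 1 ω = 1} := by
      ext ω
      simp only [Set.mem_preimage, Set.mem_prod, Set.mem_singleton_iff, Set.mem_inter_iff,
        Set.mem_setOf_eq]
    rw [h2] at h
    rw [h, hr_def, ENNReal.ofReal_toReal (measure_ne_top _ _)]
  have hqi' : ∀ i, (ℙ (X i ⁻¹' S)).toReal = q := by
    intro i; rw [hqi i, ENNReal.toReal_ofReal (le_of_lt hq0)]
  have hri' : ∀ i, (ℙ ((fun ω => (X i ω, Y i ω)) ⁻¹' (S ×ˢ ({1} : Set ℝ)))).toReal = r := by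
    intro i; rw [hri i, ENNReal.toReal_ofReal hr0]
  -- tail bounds
  have hZf : ∀ i, Z i = (X i ⁻¹' S).indicator (fun _ => (1:ℝ)) := fun i => by rw [hZ_def]
  have hWf : ∀ i, W i = ((fun ω => (X i ω, Y i ω)) ⁻¹' (S ×ˢ ({1} : Set ℝ))).indicator
      (fun _ => (1:ℝ)) := fun i => by rw [hW_def]
  have hs12 : s ≤ 1 / 2 := by rw [hs_def]; linarith
  have hrle1 : r ≤ 1 := by nlinarith [hm2, hq1, hq0.le, hm0]
  have hZtail : ∀ t : ℕ,
      ℙ {ω | ∑ ℓ ∈ Finset.Icc 1 t, Z ℓ ω ≤ (q - ε) * t} ≤ ENNReal.ofReal (Real.exp (-(a * t))) := by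
    intro t
    have hint : ∀ i ∈ Finset.Icc 1 t, Integrable (fun ω => Real.exp (-s * Z i ω)) ℙ :=
      fun i _ => bern_exp_integrable ((hmeasX i) hS) (hZf i) (-s)
    have hintsum := hZindep.integrable_exp_mul_sum hZmeas hint
    have hch := measure_le_le_exp_mul_mgf (μ := (ℙ : Measure Ω))
      (X := ∑ i ∈ Finset.Icc 1 t, Z i) ((q - ε) * t) (neg_nonpos.mpr hs0.le) hintsum
    have hmgf : mgf (∑ i ∈ Finset.Icc 1 t, Z i) ℙ (-s)
        = (1 + (Real.exp (-s) - 1) * q) ^ t := by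
      rw [hZindep.mgf_sum hZmeas]
      have heach : ∀ i ∈ Finset.Icc 1 t, mgf (Z i) ℙ (-s) = 1 + (Real.exp (-s) - 1) * q := by
        intro i _
        rw [bern_mgf ((hmeasX i) hS) (hZf i) (-s), hqi' i]
      rw [Finset.prod_congr rfl heach, Finset.prod_const, Nat.card_Icc]
      simp
    rw [hmgf] at hch
    have hbase0 : 0 ≤ 1 + (Real.exp (-s) - 1) * q := by
      nlinarith [Real.exp_pos (-s), hq1, hq0.le]
    have hbase_le : 1 + (Real.exp (-s) - 1) * q ≤ Real.exp ((s ^ 2 - s) * q) := by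
      have h1 : 1 + (Real.exp (-s) - 1) * q ≤ 1 + (s ^ 2 - s) * q := by
        nlinarith [exp_neg_le_quad hs0.le, hq0.le]
      have h2 := Real.add_one_le_exp ((s ^ 2 - s) * q)
      linarith
    have hpow : (1 + (Real.exp (-s) - 1) * q) ^ t ≤ Real.exp ((s ^ 2 - s) * q) ^ t :=
      pow_le_pow_left₀ hbase0 hbase_le t
    have hreal : Real.exp (-(-s) * ((q - ε) * t)) * (1 + (Real.exp (-s) - 1) * q) ^ t
        ≤ Real.exp (-(a * t)) := by
      have h3 : Real.exp ((s ^ 2 - s) * q) ^ t = Real.exp ((t : ℝ) * ((s ^ 2 - s) * q)) :=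
        (Real.exp_nat_mul _ t).symm
      calc Real.exp (-(-s) * ((q - ε) * t)) * (1 + (Real.exp (-s) - 1) * q) ^ t
          ≤ Real.exp (-(-s) * ((q - ε) * t)) * Real.exp ((t : ℝ) * ((s ^ 2 - s) * q)) := by
            rw [← h3]
            exact mul_le_mul_of_nonneg_left hpow (Real.exp_pos _).le
        _ = Real.exp (s * (q - ε) * t + t * ((s ^ 2 - s) * q)) := by
            rw [← Real.exp_add]; ring_nf
        _ ≤ Real.exp (-(a * t)) := by
            apply Real.exp_le_exp.mpr
            have hkey : s ^ 2 * q - s * ε ≤ -a := by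
              rw [ha_def, hs_def]
              nlinarith [sq_nonneg ε, hq1, hε0.le]
            have ht0 : (0:ℝ) ≤ t := Nat.cast_nonneg t
            nlinarith [mul_le_mul_of_nonneg_left hkey ht0]
    have hsetEq : {ω : Ω | ∑ ℓ ∈ Finset.Icc 1 t, Z ℓ ω ≤ (q - ε) * t}
        = {ω : Ω | (∑ i ∈ Finset.Icc 1 t, Z i) ω ≤ (q - ε) * t} := by
      ext ω; simp [Finset.sum_apply]
    rw [hsetEq]
    rw [← ENNReal.ofReal_toReal (measure_ne_top ℙ _)]
    exact ENNReal.ofReal_le_ofReal (hch.trans hreal)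
  have hWtail : ∀ t : ℕ,
      ℙ {ω | (r + ε) * t ≤ ∑ ℓ ∈ Finset.Icc 1 t, W ℓ ω} ≤ ENNReal.ofReal (Real.exp (-(a * t))) := by
    intro t
    have hint : ∀ i ∈ Finset.Icc 1 t, Integrable (fun ω => Real.exp (s * W i ω)) ℙ :=
      fun i _ => bern_exp_integrable ((hpairmeas i) hprodmeas) (hWf i) s
    have hintsum := hWindep.integrable_exp_mul_sum hWmeas hint
    have hch := measure_ge_le_exp_mul_mgf (μ := (ℙ : Measure Ω))
      (X := ∑ i ∈ Finset.Icc 1 t, W i) ((r + ε) * t) hs0.le hintsum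
    have hmgf : mgf (∑ i ∈ Finset.Icc 1 t, W i) ℙ s
        = (1 + (Real.exp s - 1) * r) ^ t := by
      rw [hWindep.mgf_sum hWmeas]
      have heach : ∀ i ∈ Finset.Icc 1 t, mgf (W i) ℙ s = 1 + (Real.exp s - 1) * r := by
        intro i _
        rw [bern_mgf ((hpairmeas i) hprodmeas) (hWf i) s, hri' i]
      rw [Finset.prod_congr rfl heach, Finset.prod_const, Nat.card_Icc]
      simp
    rw [hmgf] at hch
    have hbase0 : 0 ≤ 1 + (Real.exp s - 1) * r := by
      nlinarith [Real.one_le_exp hs0.le, hr0]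
    have hbase_le : 1 + (Real.exp s - 1) * r ≤ Real.exp ((s + 2 * s ^ 2) * r) := by
      have h1 : 1 + (Real.exp s - 1) * r ≤ 1 + (s + 2 * s ^ 2) * r := by
        nlinarith [exp_le_quad hs0.le hs12, hr0]
      have h2 := Real.add_one_le_exp ((s + 2 * s ^ 2) * r)
      linarith
    have hpow : (1 + (Real.exp s - 1) * r) ^ t ≤ Real.exp ((s + 2 * s ^ 2) * r) ^ t :=
      pow_le_pow_left₀ hbase0 hbase_le t
    have hreal : Real.exp (-s * ((r + ε) * t)) * (1 + (Real.exp s - 1) * r) ^ t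
        ≤ Real.exp (-(a * t)) := by
      have h3 : Real.exp ((s + 2 * s ^ 2) * r) ^ t = Real.exp ((t : ℝ) * ((s + 2 * s ^ 2) * r)) :=
        (Real.exp_nat_mul _ t).symm
      calc Real.exp (-s * ((r + ε) * t)) * (1 + (Real.exp s - 1) * r) ^ t
          ≤ Real.exp (-s * ((r + ε) * t)) * Real.exp ((t : ℝ) * ((s + 2 * s ^ 2) * r)) := by
            rw [← h3]
            exact mul_le_mul_of_nonneg_left hpow (Real.exp_pos _).le
        _ = Real.exp (-s * (r + ε) * t + t * ((s + 2 * s ^ 2) * r)) := by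
            rw [← Real.exp_add]; ring_nf
        _ ≤ Real.exp (-(a * t)) := by
            apply Real.exp_le_exp.mpr
            have hkey : 2 * s ^ 2 * r - s * ε ≤ -a := by
              rw [ha_def, hs_def]
              nlinarith [sq_nonneg ε, hrle1, hε0.le]
            have ht0 : (0:ℝ) ≤ t := Nat.cast_nonneg t
            nlinarith [mul_le_mul_of_nonneg_left hkey ht0]
    have hsetEq : {ω : Ω | (r + ε) * t ≤ ∑ ℓ ∈ Finset.Icc 1 t, W ℓ ω}
        = {ω : Ω | (r + ε) * t ≤ (∑ i ∈ Finset.Icc 1 t, W i) ω} := by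
      ext ω; simp [Finset.sum_apply]
    rw [hsetEq]
    rw [← ENNReal.ofReal_toReal (measure_ne_top ℙ _)]
    exact ENNReal.ofReal_le_ofReal (hch.trans hreal)
  -- the threshold
  set L : ℝ := Real.log (768 / (κ ^ 2 * p ^ 2 * δ)) with hL_def
  set T : ℝ := 256 / (κ ^ 2 * p ^ 2) * L with hT_def
  have hκP2 : (0:ℝ) < κ ^ 2 * p ^ 2 := mul_pos (pow_pos hκ0 2) (pow_pos hp.1 2)
  have hκ2le : κ ^ 2 ≤ 1 := by nlinarith
  have hp2le : p ^ 2 ≤ 1 := by nlinarith [hp.2, hp.1]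
  have hargs : (1:ℝ) < 768 / (κ ^ 2 * p ^ 2 * δ) := by
    rw [lt_div_iff₀ (mul_pos hκP2 hδ.1)]
    nlinarith [hδ.2, hδ.1, hκP2]
  have hL0 : 0 < L := Real.log_pos hargs
  have hT0 : 0 < T := mul_pos (div_pos (by norm_num) hκP2) hL0
  set t₀ : ℕ := ⌈T⌉₊ with ht₀_def
  have ht₀T : T ≤ (t₀ : ℝ) := Nat.le_ceil T
  -- bad set and its bound
  set Bad : Set Ω := ⋃ k : ℕ,
      ({ω | ∑ ℓ ∈ Finset.Icc 1 (t₀ + k), Z ℓ ω ≤ (q - ε) * ((t₀ + k : ℕ) : ℝ)} ∪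
       {ω | (r + ε) * ((t₀ + k : ℕ) : ℝ) ≤ ∑ ℓ ∈ Finset.Icc 1 (t₀ + k), W ℓ ω}) with hBad_def
  have hBadMeas : MeasurableSet Bad := by
    refine MeasurableSet.iUnion fun k => MeasurableSet.union ?_ ?_
    · exact measurableSet_le (Finset.measurable_sum _ fun ℓ _ => hZmeas ℓ) measurable_const
    · exact measurableSet_le measurable_const (Finset.measurable_sum _ fun ℓ _ => hWmeas ℓ)
  have hx1 : Real.exp (-a) < 1 := by
    rw [Real.exp_lt_one_iff]; linarith
  have hBadBound : ℙ Bad ≤ ENNReal.ofReal (3 * δ) := by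
    have hterm : ∀ k : ℕ,
        ℙ ({ω | ∑ ℓ ∈ Finset.Icc 1 (t₀ + k), Z ℓ ω ≤ (q - ε) * ((t₀ + k : ℕ) : ℝ)} ∪
           {ω | (r + ε) * ((t₀ + k : ℕ) : ℝ) ≤ ∑ ℓ ∈ Finset.Icc 1 (t₀ + k), W ℓ ω})
          ≤ ENNReal.ofReal (2 * Real.exp (-(a * t₀)) * Real.exp (-a) ^ k) := by
      intro k
      have h1 := hZtail (t₀ + k)
      have h2 := hWtail (t₀ + k)
      refine (measure_union_le _ _).trans ((add_le_add h1 h2).trans ?_)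
      rw [← ENNReal.ofReal_add (Real.exp_pos _).le (Real.exp_pos _).le]
      apply ENNReal.ofReal_le_ofReal
      have hexp : Real.exp (-(a * ((t₀ + k : ℕ) : ℝ)))
          = Real.exp (-(a * t₀)) * Real.exp (-a) ^ k := by
        rw [← Real.exp_nat_mul, ← Real.exp_add]
        push_cast
        ring_nf
      refine le_of_eq ?_
      rw [hexp]; ring
    have hsummable : Summable (fun k : ℕ => 2 * Real.exp (-(a * t₀)) * Real.exp (-a) ^ k) :=
      (summable_geometric_of_lt_one (Real.exp_pos _).le hx1).mul_left _
    calc ℙ Bad ≤ ∑' k : ℕ, ℙ ({ω | ∑ ℓ ∈ Finset.Icc 1 (t₀ + k), Z ℓ ω ≤ (q - ε) * ((t₀ + k : ℕ) : ℝ)} ∪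
           {ω | (r + ε) * ((t₀ + k : ℕ) : ℝ) ≤ ∑ ℓ ∈ Finset.Icc 1 (t₀ + k), W ℓ ω}) := by
          rw [hBad_def]; exact measure_iUnion_le _
      _ ≤ ∑' k : ℕ, ENNReal.ofReal (2 * Real.exp (-(a * t₀)) * Real.exp (-a) ^ k) :=
          ENNReal.tsum_le_tsum hterm
      _ = ENNReal.ofReal (∑' k : ℕ, 2 * Real.exp (-(a * t₀)) * Real.exp (-a) ^ k) :=
          (ENNReal.ofReal_tsum_of_nonneg (fun k => by positivity) hsummable).symm
      _ ≤ ENNReal.ofReal (3 * δ) := by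
          apply ENNReal.ofReal_le_ofReal
          rw [tsum_mul_left, tsum_geometric_of_lt_one (Real.exp_pos _).le hx1]
          -- real arithmetic
          have h1x : a / 2 ≤ 1 - Real.exp (-a) :=
            lem_one_sub_exp ha0 ha1 (exp_neg_le_quad ha0.le)
          have hinv : (1 - Real.exp (-a))⁻¹ ≤ (a / 2)⁻¹ :=
            inv_anti₀ (by positivity) h1x
          have hE : Real.exp (-(a * t₀)) ≤ κ ^ 2 * p ^ 2 * δ / 768 := by
            have hmono : Real.exp (-(a * t₀)) ≤ Real.exp (-(a * T)) := by
              apply Real.exp_le_exp.mpr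
              have := mul_le_mul_of_nonneg_left ht₀T ha0.le
              linarith
            have haT : a * T = 8 * L := by
              rw [ha_def, hε_def, hT_def]
              exact lem_aT hκ0.ne' hp.1.ne'
            have hexpL : Real.exp L = 768 / (κ ^ 2 * p ^ 2 * δ) := by
              rw [hL_def]
              exact Real.exp_log (div_pos (by norm_num) (mul_pos hκP2 hδ.1))
            have hy1 : κ ^ 2 * p ^ 2 * δ / 768 ≤ 1 :=
              lem_y1 hκ2le hp2le hδ.1 hδ.2 hκP2
            have hy0 : 0 < κ ^ 2 * p ^ 2 * δ / 768 := div_pos (mul_pos hκP2 hδ.1) (by norm_num)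
            have hval : Real.exp (-(a * T)) = (κ ^ 2 * p ^ 2 * δ / 768) ^ (8:ℕ) := by
              rw [haT, show -(8 * L) = (8:ℕ) * (-L) by push_cast; ring, Real.exp_nat_mul,
                Real.exp_neg, hexpL, inv_div]
            rw [hval] at hmono
            calc Real.exp (-(a * (t₀:ℝ))) ≤ (κ ^ 2 * p ^ 2 * δ / 768) ^ (8:ℕ) := hmono
              _ ≤ κ ^ 2 * p ^ 2 * δ / 768 := pow_le_of_le_one hy0.le hy1 (by norm_num)
          calc 2 * Real.exp (-(a * t₀)) * (1 - Real.exp (-a))⁻¹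
              ≤ 2 * (κ ^ 2 * p ^ 2 * δ / 768) * (a / 2)⁻¹ := by
                apply mul_le_mul (by linarith) hinv
                  (inv_nonneg.mpr (by linarith))
                  (mul_nonneg (by norm_num)
                    (div_nonneg (mul_nonneg (mul_nonneg (sq_nonneg κ) (sq_nonneg p)) hδ.1.le)
                      (by norm_num)))
            _ = δ / 6 := by
                rw [ha_def, hε_def]
                exact lem_d6 hκ0.ne' hp.1.ne'
            _ ≤ 3 * δ := by linarith [hδ.1]
  -- complement is contained in the good event
  have hsub : Badᶜ ⊆ {ω | ∀ t : ℕ,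
          256 / (κ ^ 2 * p ^ 2) * Real.log (768 / (κ ^ 2 * p ^ 2 * δ)) ≤ (t : ℝ) →
          0 < ∑ ℓ ∈ Finset.Icc 1 t, (if X ℓ ω ∈ S then (1 : ℝ) else 0) ∧
          ∑ ℓ ∈ Finset.Icc 1 t, Y ℓ ω * (if X ℓ ω ∈ S then (1 : ℝ) else 0) ≤
            (1 / 8 + 3 * logistic (-τ) / 4) *
              ∑ ℓ ∈ Finset.Icc 1 t, (if X ℓ ω ∈ S then (1 : ℝ) else 0)} := by
    intro ω hω
    simp only [Set.mem_setOf_eq]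
    intro t ht
    have ht' : T ≤ (t : ℝ) := by rw [hT_def, hL_def]; exact ht
    have ht₀le : t₀ ≤ t := Nat.ceil_le.mpr ht'
    have ht1 : 1 ≤ t := by
      rcases Nat.eq_zero_or_pos t with h | h
      · exfalso; rw [h] at ht'; simp at ht'; linarith
      · exact h
    have htR : (1:ℝ) ≤ t := Nat.one_le_cast.mpr ht1
    obtain ⟨k, hk⟩ : ∃ k, t = t₀ + k := ⟨t - t₀, by omega⟩
    simp only [hBad_def, Set.mem_compl_iff, Set.mem_iUnion, Set.mem_union, Set.mem_setOf_eq,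
      not_exists, not_or, not_le] at hω
    obtain ⟨h1, h2⟩ := hω k
    rw [← hk] at h1 h2
    have hZω : ∀ ℓ, Z ℓ ω = (if X ℓ ω ∈ S then (1:ℝ) else 0) := by
      intro ℓ; rw [hZf ℓ]; simp [Set.indicator_apply]
    have hWω : ∀ ℓ, W ℓ ω = Y ℓ ω * (if X ℓ ω ∈ S then (1:ℝ) else 0) := by
      intro ℓ
      rcases hlab ℓ ω with h | h <;> by_cases hx : X ℓ ω ∈ S <;>
        simp [hWf ℓ, Set.indicator_apply, hx, h]
    have hsZ : ∑ ℓ ∈ Finset.Icc 1 t, (if X ℓ ω ∈ S then (1:ℝ) else 0)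
        = ∑ ℓ ∈ Finset.Icc 1 t, Z ℓ ω := Finset.sum_congr rfl fun ℓ _ => (hZω ℓ).symm
    have hsW : ∑ ℓ ∈ Finset.Icc 1 t, Y ℓ ω * (if X ℓ ω ∈ S then (1:ℝ) else 0)
        = ∑ ℓ ∈ Finset.Icc 1 t, W ℓ ω := Finset.sum_congr rfl fun ℓ _ => (hWω ℓ).symm
    rw [hsZ, hsW]
    have hεq : ε < q := lem_eps_lt_q hκ0 hκ8 hp.1 hPS hε_def
    have hqε0 : 0 < q - ε := by linarith
    constructor
    · calc (0:ℝ) < (q - ε) * 1 := by linarith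
        _ ≤ (q - ε) * t := mul_le_mul_of_nonneg_left htR hqε0.le
        _ < _ := h1
    · have hεκq : 2 * ε ≤ κ * q := lem_epskq hκ0 hp.1 hPS hε_def
      have hstep : r + ε ≤ c * (q - ε) := by
        rw [hcm]
        exact lem_step hr1 hεκq hε0.le hm2 hκ8
      have hceq : c = 1 / 8 + 3 * logistic (-τ) / 4 := by rw [hc_def, hm_def]
      rw [← hceq]
      refine le_of_lt ?_
      calc ∑ ℓ ∈ Finset.Icc 1 t, W ℓ ω < (r + ε) * t := h2
        _ ≤ c * (q - ε) * t :=
            mul_le_mul_of_nonneg_right hstep (Nat.cast_nonneg t)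
        _ = c * ((q - ε) * t) := by ring
        _ ≤ c * ∑ ℓ ∈ Finset.Icc 1 t, Z ℓ ω :=
            mul_le_mul_of_nonneg_left h1.le hc0.le
  calc ENNReal.ofReal (1 - 3 * δ)
      = ENNReal.ofReal 1 - ENNReal.ofReal (3 * δ) := ENNReal.ofReal_sub _ (by linarith [hδ.1])
    _ ≤ 1 - ℙ Bad := by
        rw [ENNReal.ofReal_one]
        exact tsub_le_tsub_left hBadBound 1
    _ = ℙ Badᶜ := (prob_compl_eq_one_sub hBadMeas).symm
    _ ≤ _ := measure_mono hsub
end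

section
/- For every τ ∈ (0,1), the Kullback–Leibler divergence (with base-2 logarithms) between the Bernoulli distribution with parameter 1/2 + 487τ/6400 and the Bernoulli distribution with parameter 1/2 + τ/128 satisfies: (1/2 + 487τ/6400)·log₂( (1/2 + 487τ/6400) / (1/2 + τ/128) ) + (1/2 − 487τ/6400)·log₂( (1/2 − 487τ/6400) / (1/2 − τ/128) ) ≥ 0.013·τ². -/
/-- Pinsker's inequality for Bernoulli distributions (natural log), in the
form `2 (p - q)² ≤ KL(p‖q)` for `0 < q ≤ p < 1`. -/
lemma pinsker_aux {p q : ℝ} (hq0 : 0 < q) (hqp : q ≤ p) (hp1 : p < 1) :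
    2 * (p - q) ^ 2 ≤ p * Real.log (p / q) + (1 - p) * Real.log ((1 - p) / (1 - q)) := by
  have hp0 : 0 < p := lt_of_lt_of_le hq0 hqp
  have hq1 : q < 1 := lt_of_le_of_lt hqp hp1
  set F : ℝ → ℝ := fun x => p * Real.log p - p * Real.log x
      + ((1 - p) * Real.log (1 - p) - (1 - p) * Real.log (1 - x)) - 2 * (p - x) ^ 2 with hF
  have key : ∀ x ∈ Set.Icc q p, HasDerivAt F (-p / x + (1 - p) / (1 - x) + 4 * (p - x)) x := by
    intro x hx
    have hx0 : 0 < x := lt_of_lt_of_le hq0 hx.1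
    have hx1 : x < 1 := lt_of_le_of_lt hx.2 hp1
    have h1 : HasDerivAt (fun x : ℝ => p * Real.log p - p * Real.log x) (-(p * (1/x))) x := by
      have := ((Real.hasDerivAt_log (ne_of_gt hx0)).const_mul p).const_sub (p * Real.log p)
      simpa using this
    have h2 : HasDerivAt (fun x : ℝ => (1 - p) * Real.log (1 - p) - (1 - p) * Real.log (1 - x))
        ((1 - p) * (1 / (1 - x))) x := by
      have hinner : HasDerivAt (fun x : ℝ => (1 : ℝ) - x) (-1) x := by
        simpa using (hasDerivAt_id x).const_sub 1
      have := ((Real.hasDerivAt_log (ne_of_gt (by linarith : (0:ℝ) < 1 - x))).comp x hinner).const_mul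
        (1 - p)
      have := this.const_sub ((1 - p) * Real.log (1 - p))
      refine this.congr_deriv ?_
      ring
    have h3 : HasDerivAt (fun x : ℝ => 2 * (p - x) ^ 2) (-(4 * (p - x))) x := by
      have hinner : HasDerivAt (fun x : ℝ => p - x) (-1) x := by
        simpa using (hasDerivAt_id x).const_sub p
      have := (hinner.pow 2).const_mul 2
      refine this.congr_deriv ?_
      ring
    have := (h1.add h2).sub h3
    refine this.congr_deriv ?_
    ring
  have hanti : AntitoneOn F (Set.Icc q p) := by
    apply antitoneOn_of_deriv_nonpos (convex_Icc q p)
    · exact fun x hx => (key x hx).continuousAt.continuousWithinAt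
    · intro x hx
      rw [interior_Icc] at hx
      exact (key x (Set.mem_Icc_of_Ioo hx)).differentiableAt.differentiableWithinAt
    · intro x hx
      rw [interior_Icc] at hx
      rw [(key x (Set.mem_Icc_of_Ioo hx)).deriv]
      have hx0 : 0 < x := lt_of_lt_of_le hq0 (le_of_lt hx.1)
      have hx1 : x < 1 := lt_of_lt_of_le hx.2 (le_of_lt hp1)
      have hxp : x ≤ p := le_of_lt hx.2
      have hden : 0 < x * (1 - x) := mul_pos hx0 (by linarith)
      have hne0 : x ≠ 0 := ne_of_gt hx0
      have hne1 : (1:ℝ) - x ≠ 0 := by linarith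
      have heq : -p / x + (1 - p) / (1 - x) + 4 * (p - x)
          = ((p - x) * (4 * x * (1 - x) - 1)) / (x * (1 - x)) := by
        field_simp
        ring
      rw [heq]
      apply div_nonpos_of_nonpos_of_nonneg _ (le_of_lt hden)
      apply mul_nonpos_of_nonneg_of_nonpos
      · linarith
      · nlinarith [sq_nonneg (2 * x - 1)]
  have hFp : F p = 0 := by simp [hF]
  have hmem_q : q ∈ Set.Icc q p := Set.mem_Icc.2 ⟨le_refl q, hqp⟩
  have hmem_p : p ∈ Set.Icc q p := Set.mem_Icc.2 ⟨hqp, le_refl p⟩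
  have := hanti hmem_q hmem_p hqp
  rw [hFp] at this
  have hFq : F q = p * Real.log (p / q) + (1 - p) * Real.log ((1 - p) / (1 - q))
      - 2 * (p - q) ^ 2 := by
    rw [hF]
    rw [Real.log_div (ne_of_gt hp0) (ne_of_gt hq0),
      Real.log_div (by linarith : (1:ℝ) - p ≠ 0) (by linarith : (1:ℝ) - q ≠ 0)]
    ring
  rw [hFq] at this
  linarith

/-- Pinsker-type bound used in the paper: for every `τ ∈ (0,1)`, the base-2 KL
divergence between `Bernoulli(1/2 + 487τ/6400)` and `Bernoulli(1/2 + τ/128)` is at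
least `0.013·τ²`. -/
theorem stmt_12 (τ : ℝ) (hτ : τ ∈ Set.Ioo (0 : ℝ) 1) :
    0.013 * τ ^ 2 ≤
      (1 / 2 + 487 * τ / 6400) * Real.logb 2 ((1 / 2 + 487 * τ / 6400) / (1 / 2 + τ / 128)) +
      (1 / 2 - 487 * τ / 6400) * Real.logb 2 ((1 / 2 - 487 * τ / 6400) / (1 / 2 - τ / 128)) := by
  obtain ⟨hτ0, hτ1⟩ := hτ
  set p : ℝ := 1 / 2 + 487 * τ / 6400 with hp
  set q : ℝ := 1 / 2 + τ / 128 with hq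
  have hq0 : 0 < q := by rw [hq]; linarith
  have hqp : q ≤ p := by rw [hp, hq]; linarith
  have hp1 : p < 1 := by rw [hp]; linarith
  have h1q : (1:ℝ) - q = 1 / 2 - τ / 128 := by rw [hq]; ring
  have h1p : (1:ℝ) - p = 1 / 2 - 487 * τ / 6400 := by rw [hp]; ring
  have hkl := pinsker_aux hq0 hqp hp1
  have hlog2 : 0 < Real.log 2 := Real.log_pos (by norm_num)
  rw [← h1p, ← h1q, Real.logb, Real.logb]
  have hcomb : p * (Real.log (p / q) / Real.log 2)
      + (1 - p) * (Real.log ((1 - p) / (1 - q)) / Real.log 2)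
      = (p * Real.log (p / q) + (1 - p) * Real.log ((1 - p) / (1 - q))) / Real.log 2 := by
    ring
  rw [hcomb, le_div_iff₀ hlog2]
  have hd : p - q = 437 * τ / 6400 := by rw [hp, hq]; ring
  have hlt : Real.log 2 < 0.6931471808 := Real.log_two_lt_d9
  nlinarith [sq_nonneg τ, mul_le_mul_of_nonneg_left (le_of_lt hlt) (mul_nonneg (by norm_num : (0:ℝ) ≤ 0.013) (sq_nonneg τ)), hkl, hd]
end

section
/- For every τ ∈ (0,1): (1/2 + 49τ/500)·log₂( (1/2 + 487τ/6400) / (1/2 + τ/128) ) + (1/2 − 49τ/500)·log₂( (1/2 − 487τ/6400) / (1/2 − τ/128 + τ²/512) ) ≥ 0.009·τ² > 0. -/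
set_option maxHeartbeats 2000000 in
/-- For every `τ ∈ (0,1)`:
`(1/2 + 49τ/500)·log₂((1/2 + 487τ/6400)/(1/2 + τ/128))
 + (1/2 − 49τ/500)·log₂((1/2 − 487τ/6400)/(1/2 − τ/128 + τ²/512)) ≥ 0.009·τ² > 0`. -/
theorem stmt_15 (τ : ℝ) (hτ : τ ∈ Set.Ioo (0 : ℝ) 1) :
    0.009 * τ ^ 2 ≤
      (1 / 2 + 49 * τ / 500) *
        Real.logb 2 ((1 / 2 + 487 * τ / 6400) / (1 / 2 + τ / 128)) +
      (1 / 2 - 49 * τ / 500) *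
        Real.logb 2 ((1 / 2 - 487 * τ / 6400) / (1 / 2 - τ / 128 + τ ^ 2 / 512)) ∧
    (0 : ℝ) < 0.009 * τ ^ 2 := by
  obtain ⟨ht0, ht1⟩ := hτ
  set a : ℝ := 1 / 2 + 487 * τ / 6400 with ha_def
  set b : ℝ := 1 / 2 + τ / 128 with hb_def
  set c : ℝ := 1 / 2 - 487 * τ / 6400 with hc_def
  set d : ℝ := 1 / 2 - τ / 128 + τ ^ 2 / 512 with hd_def
  have ha : 0 < a := by rw [ha_def]; nlinarith
  have hb : 0 < b := by rw [hb_def]; nlinarith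
  have hc : 0 < c := by rw [hc_def]; nlinarith
  have hd : 0 < d := by rw [hd_def]; nlinarith
  have hl2 : 0 < Real.log 2 := Real.log_pos one_lt_two
  have hl2' : Real.log 2 < 0.6932 := lt_trans Real.log_two_lt_d9 (by norm_num)
  -- polynomial inequality
  have hpoly : 0.0062388 * τ ^ 2 * (a * c * d) ≤
      (1 / 2) * ((a * c - b * d) * d) + (49 * τ / 500) * ((a * d - b * c) * c) := by
    rw [ha_def, hb_def, hc_def, hd_def]
    nlinarith [sq_nonneg τ, sq_nonneg (τ * τ), mul_pos ht0 ht0,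
      mul_nonneg (mul_nonneg ht0.le ht0.le) (sub_nonneg.2 ht1.le),
      mul_nonneg (mul_nonneg (mul_nonneg ht0.le ht0.le) ht0.le) (sub_nonneg.2 ht1.le),
      mul_nonneg (mul_nonneg (mul_nonneg (mul_nonneg ht0.le ht0.le) ht0.le) ht0.le)
        (sub_nonneg.2 ht1.le)]
  -- rational bound
  have h5 : 0.0062388 * τ ^ 2 ≤
      (1 / 2) * (1 - b * d / (a * c)) + (49 * τ / 500) * (1 - b * c / (a * d)) := by
    rw [← sub_nonneg]
    have hx : (1 / 2) * (1 - b * d / (a * c)) + (49 * τ / 500) * (1 - b * c / (a * d)) -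
        0.0062388 * τ ^ 2 =
        ((1 / 2) * ((a * c - b * d) * d) + (49 * τ / 500) * ((a * d - b * c) * c) -
          0.0062388 * τ ^ 2 * (a * c * d)) / (a * c * d) := by
      field_simp
    rw [hx]
    apply div_nonneg (by linarith) (by positivity)
  -- log lower bounds
  have hp := Real.one_sub_inv_le_log_of_pos (show 0 < a * c / (b * d) by positivity)
  rw [Real.log_div (by positivity) (by positivity), Real.log_mul ha.ne' hc.ne',
    Real.log_mul hb.ne' hd.ne', inv_div] at hp
  have hq := Real.one_sub_inv_le_log_of_pos (show 0 < a * d / (b * c) by positivity)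
  rw [Real.log_div (by positivity) (by positivity), Real.log_mul ha.ne' hd.ne',
    Real.log_mul hb.ne' hc.ne', inv_div] at hq
  constructor
  · rw [← Real.log_div_log, ← Real.log_div_log]
    have e1 : (1 / 2 + 49 * τ / 500) * (Real.log (a / b) / Real.log 2) +
        (1 / 2 - 49 * τ / 500) * (Real.log (c / d) / Real.log 2) =
        ((1 / 2 + 49 * τ / 500) * Real.log (a / b) +
          (1 / 2 - 49 * τ / 500) * Real.log (c / d)) / Real.log 2 := by ring
    rw [e1, le_div_iff₀ hl2, Real.log_div ha.ne' hb.ne', Real.log_div hc.ne' hd.ne']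
    have e2 : (1 / 2 + 49 * τ / 500) * (Real.log a - Real.log b) +
        (1 / 2 - 49 * τ / 500) * (Real.log c - Real.log d) =
        (1 / 2) * (Real.log a + Real.log c - (Real.log b + Real.log d)) +
        (49 * τ / 500) * (Real.log a + Real.log d - (Real.log b + Real.log c)) := by ring
    rw [e2]
    have h6 : (1 / 2) * (1 - b * d / (a * c)) ≤
        (1 / 2) * (Real.log a + Real.log c - (Real.log b + Real.log d)) :=
      mul_le_mul_of_nonneg_left hp (by norm_num)
    have h7 : (49 * τ / 500) * (1 - b * c / (a * d)) ≤
        (49 * τ / 500) * (Real.log a + Real.log d - (Real.log b + Real.log c)) := by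
      apply mul_le_mul_of_nonneg_left hq (by positivity)
    have h8 : 0.009 * τ ^ 2 * Real.log 2 ≤ 0.0062388 * τ ^ 2 := by
      have := mul_le_mul_of_nonneg_left hl2'.le (show (0:ℝ) ≤ 0.009 * τ ^ 2 by positivity)
      nlinarith
    linarith
  · positivity
end

section
/- For every τ ∈ (0,1) and every real z with 0 < z ≤ 1/2 + τ/128: (1/2 + 49τ/500)·ln( (1/2 + 487τ/6400) / z ) + (1/2 − 49τ/500)·ln( (1/2 − 487τ/6400) / (1 − z + τ²/512) ) > 0. -/
set_option maxHeartbeats 1000000 in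
/-- For every `τ ∈ (0,1)` and every real `z` with `0 < z ≤ 1/2 + τ/128`:
`(1/2 + 49τ/500)·ln((1/2 + 487τ/6400)/z)
 + (1/2 − 49τ/500)·ln((1/2 − 487τ/6400)/(1 − z + τ²/512)) > 0`. -/
theorem stmt_16 (τ z : ℝ) (hτ : τ ∈ Set.Ioo (0 : ℝ) 1)
    (hz : 0 < z) (hz' : z ≤ 1 / 2 + τ / 128) :
    0 < (1 / 2 + 49 * τ / 500) * Real.log ((1 / 2 + 487 * τ / 6400) / z) +
        (1 / 2 - 49 * τ / 500) *
          Real.log ((1 / 2 - 487 * τ / 6400) / (1 - z + τ ^ 2 / 512)) := by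
  obtain ⟨ht0, ht1⟩ := hτ
  have ha : (0:ℝ) < 1 / 2 + 487 * τ / 6400 := by linarith
  have hb : (0:ℝ) < 1 / 2 - 487 * τ / 6400 := by linarith
  have hw : (0:ℝ) < 1 - z + τ ^ 2 / 512 := by nlinarith
  have hp : (0:ℝ) < 1 / 2 + 49 * τ / 500 := by linarith
  have hq : (0:ℝ) < 1 / 2 - 49 * τ / 500 := by linarith
  have hzlt : z < 1 / 2 + 487 * τ / 6400 := by linarith
  -- strict log bound for the first term
  have h1 : 1 - z / (1 / 2 + 487 * τ / 6400) <
      Real.log ((1 / 2 + 487 * τ / 6400) / z) := by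
    have hne : z / (1 / 2 + 487 * τ / 6400) ≠ 1 :=
      ne_of_lt ((div_lt_one ha).mpr hzlt)
    have hlt := Real.log_lt_sub_one_of_pos (div_pos hz ha) hne
    have heq : Real.log ((1 / 2 + 487 * τ / 6400) / z)
        = - Real.log (z / (1 / 2 + 487 * τ / 6400)) := by
      rw [← Real.log_inv, inv_div]
    rw [heq]
    linarith
  -- weak log bound for the second term
  have h2 : 1 - (1 - z + τ ^ 2 / 512) / (1 / 2 - 487 * τ / 6400) ≤
      Real.log ((1 / 2 - 487 * τ / 6400) / (1 - z + τ ^ 2 / 512)) := by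
    have hle := Real.log_le_sub_one_of_pos (div_pos hw hb)
    have heq : Real.log ((1 / 2 - 487 * τ / 6400) / (1 - z + τ ^ 2 / 512))
        = - Real.log ((1 - z + τ ^ 2 / 512) / (1 / 2 - 487 * τ / 6400)) := by
      rw [← Real.log_inv, inv_div]
    rw [heq]
    linarith
  -- polynomial inequality
  have hpoly : 0 ≤ (1 / 2 + 487 * τ / 6400) * (1 / 2 - 487 * τ / 6400)
      - (1 / 2 + 49 * τ / 500) * z * (1 / 2 - 487 * τ / 6400)
      - (1 / 2 - 49 * τ / 500) * (1 - z + τ ^ 2 / 512) * (1 / 2 + 487 * τ / 6400) := by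
    nlinarith [mul_nonneg ht0.le (by linarith : (0:ℝ) ≤ 1 / 2 + τ / 128 - z),
      sq_nonneg τ, mul_nonneg (mul_nonneg ht0.le ht0.le) ht0.le,
      mul_nonneg (mul_nonneg (mul_nonneg ht0.le ht0.le) ht0.le) ht0.le]
  have key : 0 ≤ (1 / 2 + 49 * τ / 500) * (1 - z / (1 / 2 + 487 * τ / 6400))
      + (1 / 2 - 49 * τ / 500) *
        (1 - (1 - z + τ ^ 2 / 512) / (1 / 2 - 487 * τ / 6400)) := by
    have heq : (1 / 2 + 49 * τ / 500) * (1 - z / (1 / 2 + 487 * τ / 6400))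
        + (1 / 2 - 49 * τ / 500) *
          (1 - (1 - z + τ ^ 2 / 512) / (1 / 2 - 487 * τ / 6400))
        = ((1 / 2 + 487 * τ / 6400) * (1 / 2 - 487 * τ / 6400)
          - (1 / 2 + 49 * τ / 500) * z * (1 / 2 - 487 * τ / 6400)
          - (1 / 2 - 49 * τ / 500) * (1 - z + τ ^ 2 / 512) * (1 / 2 + 487 * τ / 6400))
          / ((1 / 2 + 487 * τ / 6400) * (1 / 2 - 487 * τ / 6400)) := by
      rw [eq_div_iff (mul_pos ha hb).ne']
      have e1 : z / (1 / 2 + 487 * τ / 6400) * (1 / 2 + 487 * τ / 6400) = z :=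
        div_mul_cancel₀ _ ha.ne'
      have e2 : (1 - z + τ ^ 2 / 512) / (1 / 2 - 487 * τ / 6400) * (1 / 2 - 487 * τ / 6400)
          = 1 - z + τ ^ 2 / 512 := div_mul_cancel₀ _ hb.ne'
      nlinarith [e1, e2]
    rw [heq]
    exact div_nonneg hpoly (mul_pos ha hb).le
  have A := mul_lt_mul_of_pos_left h1 hp
  have B := mul_le_mul_of_nonneg_left h2 hq.le
  linarith
end

section
/- For every τ ∈ (0,1), define g_τ(z) = (1/2 + 49τ/500)·ln(1/z) + (1/2 − 49τ/500)·ln( 1/(1 − z + τ²/512) ) for z ∈ (0,1). Then g_τ is nonincreasing on the interval (0, 1/2 + τ/128]; that is, for all 0 < z ≤ z' ≤ 1/2 + τ/128, g_τ(z) ≥ g_τ(z'). -/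
/-- For every `τ ∈ (0,1)`, the function
`g_τ(z) = (1/2 + 49τ/500)·ln(1/z) + (1/2 − 49τ/500)·ln(1/(1 − z + τ²/512))`
is nonincreasing on `(0, 1/2 + τ/128]`: for all `0 < z ≤ z' ≤ 1/2 + τ/128`,
`g_τ(z) ≥ g_τ(z')`. -/
theorem stmt_18 (τ z z' : ℝ) (hτ : τ ∈ Set.Ioo (0 : ℝ) 1)
    (hz : 0 < z) (hzz' : z ≤ z') (hz' : z' ≤ 1 / 2 + τ / 128) :
    (1 / 2 + 49 * τ / 500) * Real.log (1 / z') +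
        (1 / 2 - 49 * τ / 500) * Real.log (1 / (1 - z' + τ ^ 2 / 512)) ≤
      (1 / 2 + 49 * τ / 500) * Real.log (1 / z) +
        (1 / 2 - 49 * τ / 500) * Real.log (1 / (1 - z + τ ^ 2 / 512)) := by
  obtain ⟨hτ0, hτ1⟩ := hτ
  set a : ℝ := 1 / 2 + 49 * τ / 500 with ha
  set b : ℝ := 1 / 2 - 49 * τ / 500 with hb
  set c : ℝ := τ ^ 2 / 512 with hc
  set m : ℝ := 1 / 2 + τ / 128 with hm
  have ha0 : 0 < a := by rw [ha]; nlinarith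
  have hb0 : 0 < b := by rw [hb]; nlinarith
  have hc0 : 0 < c := by rw [hc]; positivity
  have hm1 : m < 1 := by rw [hm]; nlinarith
  set F : ℝ → ℝ := fun x => a * Real.log x + b * Real.log (1 - x + c) with hF
  have hder : ∀ x : ℝ, 0 < x → x ≤ m →
      HasDerivAt F (a * x⁻¹ + b * ((0 - 1) / (1 - x + c))) x := by
    intro x hx0 hxm
    have hden : (0 : ℝ) < 1 - x + c := by nlinarith
    have h1 : HasDerivAt (fun y : ℝ => 1 - y + c) (0 - 1) x :=
      ((hasDerivAt_const x (1 : ℝ)).sub (hasDerivAt_id x)).add_const c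
    exact ((Real.hasDerivAt_log hx0.ne').const_mul a).add
      ((h1.log hden.ne').const_mul b)
  have hmono : MonotoneOn F (Set.Ioc 0 m) := by
    apply monotoneOn_of_deriv_nonneg (convex_Ioc 0 m)
    · exact fun x hx => (hder x hx.1 hx.2).continuousAt.continuousWithinAt
    · rw [interior_Ioc]
      exact fun x hx => (hder x hx.1 hx.2.le).differentiableAt.differentiableWithinAt
    · rw [interior_Ioc]
      intro x hx
      rw [(hder x hx.1 hx.2.le).deriv]
      have hden : (0 : ℝ) < 1 - x + c := by nlinarith [hx.2, hx.1]
      have key : b * x ≤ a * (1 - x + c) := by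
        have h1 : x < m := hx.2
        rw [hm] at h1
        rw [ha, hb, hc]
        nlinarith [sq_nonneg τ, mul_nonneg hτ0.le (sq_nonneg τ)]
      have h2 : b / (1 - x + c) ≤ a / x :=
        (div_le_div_iff₀ hden hx.1).mpr key
      have e1 : a * x⁻¹ + b * ((0 - 1) / (1 - x + c)) = a / x - b / (1 - x + c) := by
        ring
      rw [e1]
      linarith
  have hzm : z ∈ Set.Ioc (0 : ℝ) m := ⟨hz, hzz'.trans hz'⟩
  have hz'm : z' ∈ Set.Ioc (0 : ℝ) m := ⟨hz.trans_le hzz', hz'⟩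
  have hFF := hmono hzm hz'm hzz'
  have e : ∀ t : ℝ, Real.log (1 / t) = -Real.log t := fun t => by
    rw [one_div, Real.log_inv]
  simp only [e]
  simp only [hF] at hFF
  linarith
end

section
/- Let α ∈ (0,1], p ∈ (0,1], δ ∈ (0,1), let B ≥ p, and let C be a real number with 0 ≤ 2 − C − 2α ≤ 2. Then for every real t ≥ (1024/(α²p²))·ln(6144/(α²p²δ)), it holds that t·α·B ≥ 4·(2 − C − 2α)·√( t·ln(6·t²·ln(t)/δ) ). -/
set_option maxHeartbeats 1000000


/-- Let `α ∈ (0,1]`, `p ∈ (0,1]`, `δ ∈ (0,1)`, `B ≥ p`, and `C` with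
`0 ≤ 2 − C − 2α ≤ 2`. Then every real `t ≥ (1024/(α²p²))·ln(6144/(α²p²δ))` satisfies
`t·α·B ≥ 4·(2 − C − 2α)·√(t·ln(6·t²·ln(t)/δ))`. -/
theorem stmt_19 (α p δ B C t : ℝ) (hα : α ∈ Set.Ioc (0 : ℝ) 1)
    (hp : p ∈ Set.Ioc (0 : ℝ) 1) (hδ : δ ∈ Set.Ioo (0 : ℝ) 1)
    (hB : p ≤ B) (hC₀ : 0 ≤ 2 - C - 2 * α) (hC₂ : 2 - C - 2 * α ≤ 2)
    (ht : 1024 / (α ^ 2 * p ^ 2) * Real.log (6144 / (α ^ 2 * p ^ 2 * δ)) ≤ t) :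
    4 * (2 - C - 2 * α) * Real.sqrt (t * Real.log (6 * t ^ 2 * Real.log t / δ))
      ≤ t * α * B := by
  obtain ⟨hα0, hα1⟩ := hα
  obtain ⟨hp0, hp1⟩ := hp
  obtain ⟨hδ0, hδ1⟩ := hδ
  set ε : ℝ := α * p with hεdef
  have hε0 : 0 < ε := mul_pos hα0 hp0
  have hε1 : ε ≤ 1 := by nlinarith
  have hεsq : α ^ 2 * p ^ 2 = ε ^ 2 := by ring
  rw [hεsq] at ht
  have hεsq0 : (0:ℝ) < ε ^ 2 := by positivity
  have hεsq1 : ε ^ 2 ≤ 1 := by nlinarith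
  have hargS0 : (0:ℝ) < 6144 / (ε ^ 2 * δ) := by positivity
  have hexp1 : Real.exp 1 ≤ 3 := by
    have := Real.exp_one_lt_d9
    linarith
  have hS1 : 1 ≤ Real.log (6144 / (ε ^ 2 * δ)) := by
    rw [Real.le_log_iff_exp_le hargS0]
    have h2 : (6144:ℝ) ≤ 6144 / (ε ^ 2 * δ) := by
      rw [le_div_iff₀ (by positivity)]
      nlinarith
    linarith
  have hT1024 : 1024 * Real.log (6144 / (ε ^ 2 * δ)) ≤ t * ε ^ 2 := by
    have h := mul_le_mul_of_nonneg_right ht hεsq0.le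
    calc 1024 * Real.log (6144 / (ε ^ 2 * δ))
        = 1024 / ε ^ 2 * Real.log (6144 / (ε ^ 2 * δ)) * ε ^ 2 := by
          field_simp
      _ ≤ t * ε ^ 2 := h
  have hTge : (1024:ℝ) ≤ t * ε ^ 2 := by nlinarith
  have ht0 : (0:ℝ) < t := by nlinarith
  have ht1024 : (1024:ℝ) ≤ t := by nlinarith
  have hlogt1 : 1 ≤ Real.log t := by
    rw [Real.le_log_iff_exp_le ht0]; linarith
  have hlogt0 : 0 < Real.log t := by linarith
  have hlogε : Real.log ε ≤ 0 := Real.log_nonpos hε0.le hε1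
  have hlogδ : Real.log δ ≤ 0 := Real.log_nonpos hδ0.le hδ1.le
  have hSdecomp : Real.log (6144 / (ε ^ 2 * δ))
      = Real.log 6144 - 2 * Real.log ε - Real.log δ := by
    rw [Real.log_div (by norm_num) (by positivity : (0:ℝ) < ε ^ 2 * δ).ne',
      Real.log_mul hεsq0.ne' hδ0.ne', Real.log_pow]
    push_cast; ring
  have hLdecomp : Real.log (6 * t ^ 2 * Real.log t / δ)
      = Real.log 6 + 2 * Real.log t + Real.log (Real.log t) - Real.log δ := by
    rw [Real.log_div (by positivity : (0:ℝ) < 6 * t ^ 2 * Real.log t).ne' hδ0.ne',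
      Real.log_mul (by positivity : (0:ℝ) < 6 * t ^ 2).ne' hlogt0.ne',
      Real.log_mul (by norm_num : (6:ℝ) ≠ 0) (by positivity : (0:ℝ) < t ^ 2).ne',
      Real.log_pow]
    push_cast; ring
  have hloglog : Real.log (Real.log t) ≤ Real.log t - 1 :=
    Real.log_le_sub_one_of_pos hlogt0
  have hlogtT : Real.log t = Real.log (t * ε ^ 2) - 2 * Real.log ε := by
    rw [Real.log_mul ht0.ne' hεsq0.ne', Real.log_pow]
    push_cast; ring
  have hlogT : Real.log (t * ε ^ 2) ≤ t * ε ^ 2 / 1024 - 1 + Real.log 1024 := by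
    have h1 := Real.log_le_sub_one_of_pos (x := t * ε ^ 2 / 1024) (by positivity)
    have h2 : Real.log (t * ε ^ 2 / 1024) = Real.log (t * ε ^ 2) - Real.log 1024 :=
      Real.log_div (by positivity) (by norm_num)
    linarith
  have h6144 : Real.log 6144 = Real.log 1024 + Real.log 6 := by
    rw [← Real.log_mul (by norm_num) (by norm_num)]; norm_num
  have hlog6 : 0 ≤ Real.log 6 := Real.log_nonneg (by norm_num)
  have hkey : 64 * Real.log (6 * t ^ 2 * Real.log t / δ) ≤ t * ε ^ 2 := by
    rw [hLdecomp]
    rw [hSdecomp, h6144] at hT1024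
    linarith
  -- squaring step
  have h64 : 64 * (t * Real.log (6 * t ^ 2 * Real.log t / δ)) ≤ (t * ε) ^ 2 := by
    nlinarith [mul_le_mul_of_nonneg_left hkey ht0.le]
  have hsqrt : 8 * Real.sqrt (t * Real.log (6 * t ^ 2 * Real.log t / δ)) ≤ t * ε := by
    have h1 : Real.sqrt (64 * (t * Real.log (6 * t ^ 2 * Real.log t / δ)))
        ≤ Real.sqrt ((t * ε) ^ 2) := Real.sqrt_le_sqrt h64
    have h2 : Real.sqrt ((t * ε) ^ 2) = t * ε := Real.sqrt_sq (by positivity)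
    have h3 : Real.sqrt (64 * (t * Real.log (6 * t ^ 2 * Real.log t / δ)))
        = 8 * Real.sqrt (t * Real.log (6 * t ^ 2 * Real.log t / δ)) := by
      rw [show (64:ℝ) * (t * Real.log (6 * t ^ 2 * Real.log t / δ))
          = 8 ^ 2 * (t * Real.log (6 * t ^ 2 * Real.log t / δ)) by ring,
        Real.sqrt_mul (by positivity), Real.sqrt_sq (by norm_num : (0:ℝ) ≤ 8)]
    rw [h3, h2] at h1
    exact h1
  have hεB : t * ε ≤ t * α * B := by
    have h := mul_le_mul_of_nonneg_left hB (le_of_lt (mul_pos ht0 hα0))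
    calc t * ε = t * α * p := by rw [hεdef]; ring
      _ ≤ t * α * B := h
  nlinarith [Real.sqrt_nonneg (t * Real.log (6 * t ^ 2 * Real.log t / δ))]
end
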